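/- arXiv:2005.03883 — 4 statements merged into one kernel-verified Lean document; each statement's English description precedes it below -/
import Mathlib

section
/- The genuine α-Bernstein-Durrmeyer operator reproduces linear functions: G_n^α(e_1; z) = z for all z ∈ ℂ, n ≥ 2, α ∈ [0,1], where e_1(t) = t. -/
open scoped BigOperators Nat

lemma beta_nat (a b : ℕ) :
    ∫ t in (0:ℝ)..1, (t:ℂ)^a * (1-(t:ℂ))^b = (a ! * b ! : ℂ) / ((a+b+1)! : ℂ) := by
  have h := Complex.Gamma_mul_Gamma_eq_betaIntegral (s := (a:ℂ)+1) (t := (b:ℂ)+1)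
    (by simp; positivity) (by simp; positivity)
  rw [Complex.betaIntegral] at h
  have e1 : ((a:ℂ)+1) - 1 = (a:ℂ) := by ring
  have e2 : ((b:ℂ)+1) - 1 = (b:ℂ) := by ring
  simp only [e1, e2] at h
  have hint : (∫ t in (0:ℝ)..1, (t:ℂ) ^ ((a:ℂ)) * (1-(t:ℂ)) ^ ((b:ℂ))) =
      ∫ t in (0:ℝ)..1, (t:ℂ)^a * (1-(t:ℂ))^b := by
    apply intervalIntegral.integral_congr
    intro x _
    simp only [Complex.cpow_natCast]
  rw [hint] at h
  have hg1 : Complex.Gamma ((a:ℂ)+1) = (a ! : ℂ) := by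
    exact_mod_cast Complex.Gamma_nat_eq_factorial a
  have hg2 : Complex.Gamma ((b:ℂ)+1) = (b ! : ℂ) := by
    exact_mod_cast Complex.Gamma_nat_eq_factorial b
  have hg3 : Complex.Gamma ((a:ℂ)+1+((b:ℂ)+1)) = ((a+b+1)! : ℂ) := by
    have : (a:ℂ)+1+((b:ℂ)+1) = ((a+b+1 : ℕ) : ℂ) + 1 := by push_cast; ring
    rw [this]
    exact_mod_cast Complex.Gamma_nat_eq_factorial (a+b+1)
  rw [hg1, hg2, hg3] at h
  rw [eq_div_iff (by exact_mod_cast Nat.cast_ne_zero.mpr (Nat.factorial_ne_zero (a+b+1)))]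
  rw [mul_comm, ← h]

lemma bern_eval (m k : ℕ) (z : ℂ) :
    (bernsteinPolynomial ℂ m k).eval z = (m.choose k : ℂ) * z^k * (1-z)^(m-k) := by
  simp [bernsteinPolynomial]

lemma bern_one (m : ℕ) (z : ℂ) :
    ∑ k ∈ Finset.range (m+1), (m.choose k : ℂ) * z^k * (1-z)^(m-k) = 1 := by
  have h := bernsteinPolynomial.sum ℂ m
  have := congrArg (Polynomial.eval z) h
  simpa [Polynomial.eval_finset_sum, bern_eval] using this

lemma bern_e1 (m : ℕ) (z : ℂ) :
    ∑ k ∈ Finset.range (m+1), (k:ℂ) * (m.choose k : ℂ) * z^k * (1-z)^(m-k) = (m:ℂ) * z := by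
  have h := bernsteinPolynomial.sum_smul ℂ m
  have := congrArg (Polynomial.eval z) h
  simp only [Polynomial.eval_finset_sum, nsmul_eq_mul, Polynomial.eval_mul,
    Polynomial.eval_natCast, bern_eval, Polynomial.eval_X] at this
  calc ∑ k ∈ Finset.range (m+1), (k:ℂ) * (m.choose k : ℂ) * z^k * (1-z)^(m-k)
      = ∑ k ∈ Finset.range (m+1), (k:ℂ) * ((m.choose k : ℂ) * z^k * (1-z)^(m-k)) := by
        apply Finset.sum_congr rfl; intro k _; ring
    _ = (m:ℂ) * z := by rw [this]

noncomputable def qb (α : ℝ) (n k : ℕ) (z : ℂ) : ℂ :=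
  if n = 1 then (if k = 0 then 1 - z else if k = 1 then z else 0)
  else ((n-2).choose k : ℂ) * (1 - (α:ℂ)) * z^k * (1-z)^(n-k-1)
    + (if 2 ≤ k then ((n-2).choose (k-2) : ℂ) * (1 - (α:ℂ)) * z^(k-1) * (1-z)^(n-k) else 0)
    + (n.choose k : ℂ) * (α:ℂ) * z^k * (1-z)^(n-k)

lemma key_sum (m : ℕ) (α : ℝ) (z : ℂ) :
    ∑ k ∈ Finset.range (m+3), (k:ℂ) * qb α (m+2) k z = ((m:ℂ)+2) * z := by
  have hq : ∀ k : ℕ, (k:ℂ) * qb α (m+2) k z =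
      (k:ℂ) * ((m.choose k : ℂ)*(1-(α:ℂ))*z^k*(1-z)^(m+1-k))
      + (k:ℂ) * (if 2 ≤ k then (m.choose (k-2):ℂ)*(1-(α:ℂ))*z^(k-1)*(1-z)^(m+2-k) else 0)
      + (k:ℂ) * (((m+2).choose k : ℂ)*(α:ℂ)*z^k*(1-z)^(m+2-k)) := by
    intro k
    rw [qb, if_neg (by omega : ¬ m+2 = 1)]
    have e1 : m+2-2 = m := by omega
    have e2 : m+2-k-1 = m+1-k := by omega
    rw [e1, e2]; ring
  simp only [hq]
  rw [Finset.sum_add_distrib, Finset.sum_add_distrib]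
  have hS1 : ∑ k ∈ Finset.range (m+3), (k:ℂ) * ((m.choose k : ℂ)*(1-(α:ℂ))*z^k*(1-z)^(m+1-k))
      = (1-(α:ℂ)) * (1-z) * ((m:ℂ)*z) := by
    rw [show m+3 = (m+1)+1+1 from rfl, Finset.sum_range_succ, Finset.sum_range_succ]
    rw [Nat.choose_eq_zero_of_lt (by omega), Nat.choose_eq_zero_of_lt (by omega)]
    simp only [Nat.cast_zero, zero_mul, mul_zero, add_zero]
    have hcg : ∀ k ∈ Finset.range (m+1),
        (k:ℂ) * ((m.choose k : ℂ)*(1-(α:ℂ))*z^k*(1-z)^(m+1-k))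
        = ((1-(α:ℂ))*(1-z)) * ((k:ℂ) * (m.choose k : ℂ) * z^k * (1-z)^(m-k)) := by
      intro k hk
      rw [Finset.mem_range] at hk
      rw [show m+1-k = (m-k)+1 by omega, pow_succ]
      all_goals ring
    rw [Finset.sum_congr rfl hcg, ← Finset.mul_sum, bern_e1]
  have hS2 : ∑ k ∈ Finset.range (m+3),
      (k:ℂ) * (if 2 ≤ k then (m.choose (k-2):ℂ)*(1-(α:ℂ))*z^(k-1)*(1-z)^(m+2-k) else 0)
      = (1-(α:ℂ)) * z * ((m:ℂ)*z + 2) := by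
    rw [show m+3 = (m+2)+1 from rfl, Finset.sum_range_succ']
    rw [show m+2 = (m+1)+1 from rfl, Finset.sum_range_succ']
    rw [if_neg (by omega : ¬ 2 ≤ 0+1), if_neg (by omega : ¬ 2 ≤ 0)]
    simp only [Nat.cast_zero, zero_mul, mul_zero, add_zero]
    have hcg : ∀ i ∈ Finset.range (m+1),
        ((i+1+1 : ℕ):ℂ) * (if 2 ≤ i+1+1 then
            (m.choose (i+1+1-2):ℂ)*(1-(α:ℂ))*z^(i+1+1-1)*(1-z)^(m+2-(i+1+1)) else 0)
        = ((1-(α:ℂ))*z) * ((i:ℂ) * (m.choose i : ℂ) * z^i * (1-z)^(m-i))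
          + (2*((1-(α:ℂ))*z)) * ((m.choose i : ℂ) * z^i * (1-z)^(m-i)) := by
      intro i hi
      rw [Finset.mem_range] at hi
      rw [if_pos (by omega)]
      rw [show i+1+1-2 = i from rfl, show i+1+1-1 = i+1 from rfl,
        show m+2-(i+1+1) = m-i by omega, pow_succ]
      push_cast; ring
    rw [Finset.sum_congr rfl hcg, Finset.sum_add_distrib, ← Finset.mul_sum, ← Finset.mul_sum,
      bern_e1, bern_one]
    ring
  have hS3 : ∑ k ∈ Finset.range (m+3), (k:ℂ) * (((m+2).choose k : ℂ)*(α:ℂ)*z^k*(1-z)^(m+2-k))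
      = (α:ℂ) * (((m:ℂ)+2)*z) := by
    have hcg : ∀ k ∈ Finset.range (m+3),
        (k:ℂ) * (((m+2).choose k : ℂ)*(α:ℂ)*z^k*(1-z)^(m+2-k))
        = (α:ℂ) * ((k:ℂ) * ((m+2).choose k : ℂ) * z^k * (1-z)^(m+2-k)) := by
      intro k _; ring
    rw [Finset.sum_congr rfl hcg, ← Finset.mul_sum,
      show m+3 = (m+2)+1 from rfl, bern_e1 (m+2) z]
    push_cast; ring
  rw [hS1, hS2, hS3]; ring
lemma integ (m j : ℕ) (hj : j ≤ m) :
    (∫ t in (0:ℝ)..1, ((m.choose j : ℂ) * (t:ℂ)^j * (1-(t:ℂ))^(m-j) * (t:ℂ)))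
    = ((j:ℂ)+1) / (((m:ℂ)+2) * ((m:ℂ)+1)) := by
  have hfun : (fun t:ℝ => (m.choose j : ℂ) * (t:ℂ)^j * (1-(t:ℂ))^(m-j) * (t:ℂ))
       = fun t:ℝ => (m.choose j : ℂ) * ((t:ℂ)^(j+1) * (1-(t:ℂ))^(m-j)) := by
    funext t; rw [pow_succ]; ring
  rw [hfun, intervalIntegral.integral_const_mul, beta_nat]
  rw [show j+1+(m-j)+1 = m+2 by omega]
  have h1 : m.choose j * (j+1)! * (m-j)! = (j+1) * m ! := by
    rw [Nat.factorial_succ]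
    rw [show m.choose j * ((j+1) * j !) * (m-j)! = (j+1) * (m.choose j * j ! * (m-j)!) by ring]
    rw [Nat.choose_mul_factorial_mul_factorial hj]
  have hch : (m.choose j : ℂ) * ((j+1)! : ℂ) * ((m-j)! : ℂ) = ((j:ℂ)+1) * (m ! : ℂ) := by
    exact_mod_cast congrArg (Nat.cast (R := ℂ)) h1
  have hfac : (((m+2)! : ℕ) : ℂ) = ((m:ℂ)+2)*(((m:ℂ)+1)*((m ! : ℕ) : ℂ)) := by
    rw [show (m+2)! = (m+2)*((m+1)*m !) by rw [Nat.factorial_succ, Nat.factorial_succ]]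
    push_cast; ring
  have hm2 : ((m:ℂ)+2) ≠ 0 := by
    exact_mod_cast (Nat.cast_ne_zero (R := ℂ)).mpr (by omega : m+2 ≠ 0)
  have hm1 : ((m:ℂ)+1) ≠ 0 := by
    exact_mod_cast (Nat.cast_ne_zero (R := ℂ)).mpr (by omega : m+1 ≠ 0)
  have hfne : (((m+2)! : ℕ) : ℂ) ≠ 0 :=
    (Nat.cast_ne_zero (R := ℂ)).mpr (Nat.factorial_ne_zero _)
  rw [mul_div_assoc', div_eq_div_iff hfne (mul_ne_zero hm2 hm1), hfac]
  linear_combination (((m:ℂ)+2)*((m:ℂ)+1)) * hch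

lemma key_sum' (m : ℕ) (α : ℝ) (z : ℂ) :
    (∑ i ∈ Finset.range (m+1), ((i:ℂ)+1) * qb α (m+2) (1+i) z)
      = ((m:ℂ)+2) * z - ((m:ℂ)+2) * qb α (m+2) (m+2) z := by
  have key := key_sum m α z
  have e1 : ∑ k ∈ Finset.range (m+3), (k:ℂ) * qb α (m+2) k z
      = (∑ k ∈ Finset.range (m+2), (k:ℂ) * qb α (m+2) k z)
        + ((m+2 : ℕ):ℂ) * qb α (m+2) (m+2) z :=
    Finset.sum_range_succ _ (m+2)
  have e2 : ∑ k ∈ Finset.range (m+2), (k:ℂ) * qb α (m+2) k z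
      = (∑ i ∈ Finset.range (m+1), ((i+1 : ℕ):ℂ) * qb α (m+2) (i+1) z)
        + ((0:ℕ):ℂ) * qb α (m+2) 0 z :=
    Finset.sum_range_succ' _ (m+1)
  rw [e1, e2] at key
  have ecg : ∀ i ∈ Finset.range (m+1),
      ((i+1 : ℕ):ℂ) * qb α (m+2) (i+1) z = ((i:ℂ)+1) * qb α (m+2) (1+i) z := by
    intro i _
    rw [add_comm 1 i]; push_cast; ring
  rw [Finset.sum_congr rfl ecg] at key
  push_cast at key
  linear_combination key

noncomputable def Gop (α : ℝ) (n : ℕ) (f : ℂ → ℂ) (z : ℂ) : ℂ :=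
  qb α n 0 z * f 0 + qb α n n z * f 1 +
    ((n:ℂ) - 1) * ∑ k ∈ Finset.Icc 1 (n-1), qb α n k z *
      ∫ t in (0:ℝ)..1, (((n-2).choose (k-1) : ℂ) * (t:ℂ)^(k-1) * (1-(t:ℂ))^(n-k-1) * f (t:ℂ))

theorem Gop_e1 (n : ℕ) (hn : 2 ≤ n) (α : ℝ) (hα : α ∈ Set.Icc (0:ℝ) 1) (z : ℂ) :
    Gop α n (fun w => w) z = z := by
  obtain ⟨m, rfl⟩ : ∃ m, n = m+2 := ⟨n-2, by omega⟩
  have hm2 : ((m:ℂ)+2) ≠ 0 := by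
    exact_mod_cast (Nat.cast_ne_zero (R := ℂ)).mpr (by omega : m+2 ≠ 0)
  have hm1 : ((m:ℂ)+1) ≠ 0 := by
    exact_mod_cast (Nat.cast_ne_zero (R := ℂ)).mpr (by omega : m+1 ≠ 0)
  simp only [Gop]
  rw [show m+2-1 = m+1 from rfl, ← Finset.Ico_add_one_right_eq_Icc,
    Finset.sum_Ico_eq_sum_range, show m+1+1-1 = m+1 from rfl]
  have hterm : ∀ i ∈ Finset.range (m+1),
      qb α (m+2) (1+i) z * (∫ t in (0:ℝ)..1,
        (((m+2-2).choose (1+i-1) : ℂ) * (t:ℂ)^(1+i-1) * (1-(t:ℂ))^(m+2-(1+i)-1) * ((t:ℂ))))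
      = ((i:ℂ)+1) * qb α (m+2) (1+i) z * (1/(((m:ℂ)+2)*((m:ℂ)+1))) := by
    intro i hi
    rw [Finset.mem_range] at hi
    have e : (∫ t in (0:ℝ)..1,
        (((m+2-2).choose (1+i-1) : ℂ) * (t:ℂ)^(1+i-1) * (1-(t:ℂ))^(m+2-(1+i)-1) * ((t:ℂ))))
        = ((i:ℂ)+1)/(((m:ℂ)+2)*((m:ℂ)+1)) := by
      rw [show m+2-2 = m from rfl, show 1+i-1 = i by omega,
        show m+2-(1+i)-1 = m-i by omega]
      exact integ m i (by omega)
    rw [e]; ring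
  rw [Finset.sum_congr rfl hterm, ← Finset.sum_mul, key_sum' m α z]
  have hc : ((m+2:ℕ):ℂ) = (m:ℂ)+2 := by push_cast; ring
  rw [hc]
  field_simp
  ring
end

section
/- For the second moment, G_n^α(e_2; z) = z^2 + (2z(1-z)/(n+1))(1 + (1-α)/n) for all z ∈ ℂ, n ≥ 2, α ∈ [0,1], where e_2(t) = t^2. -/
open scoped BigOperators Nat

/-!
Since `e₂(0) = 0` and the Beta integral gives
`(n - 1) ∫₀¹ p_{n-2,k-1}(t) t² dt = k(k+1)/(n(n+1))`, a weight that also equals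
`e₂(1) = 1` at `k = n`, the operator is `Σₖ q_{n,k}^α(z) k(k+1)/(n(n+1))`.
For `n = m + 2` the kernel is `q_{n,k}^α = (1-α)((1-z) b_{m,k} + z b_{m,k-2}) + α b_{m+2,k}`
in the Bernstein basis, so the sum reduces to the moments `Σ b_{N,k}`, `Σ k b_{N,k}`,
`Σ k² b_{N,k}`.
-/

open Finset Polynomial

section BernsteinMoments

variable {R : Type*} [CommRing R]

lemma bernsteinPolynomial_eval (n ν : ℕ) (x : R) :
    (bernsteinPolynomial R n ν).eval x = n.choose ν * x ^ ν * (1 - x) ^ (n - ν) := by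
  simp [bernsteinPolynomial]

lemma sum_bernsteinPolynomial_eval (n : ℕ) (x : R) :
    ∑ ν ∈ range (n + 1), (bernsteinPolynomial R n ν).eval x = 1 := by
  simpa [eval_finsetSum] using congrArg (eval x) (bernsteinPolynomial.sum R n)

lemma sum_mul_bernsteinPolynomial_eval (n : ℕ) (x : R) :
    ∑ ν ∈ range (n + 1), (ν : R) * (bernsteinPolynomial R n ν).eval x = n * x := by
  simpa [eval_finsetSum, nsmul_eq_mul] using congrArg (eval x) (bernsteinPolynomial.sum_smul R n)

lemma natCast_mul_sub_one (k : ℕ) : ((k * (k - 1) : ℕ) : R) = k * (k - 1) := by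
  cases k <;> simp

lemma sum_sq_mul_bernsteinPolynomial_eval (n : ℕ) (x : R) :
    ∑ ν ∈ range (n + 1), (ν : R) ^ 2 * (bernsteinPolynomial R n ν).eval x
      = n * (n - 1) * x ^ 2 + n * x := by
  have h := congrArg (eval x) (bernsteinPolynomial.sum_mul_smul R n)
  simp only [eval_finsetSum, nsmul_eq_mul, natCast_mul_sub_one, eval_mul, eval_natCast, eval_sub,
    eval_one, eval_pow, eval_X] at h
  rw [← h, ← sum_mul_bernsteinPolynomial_eval, ← sum_add_distrib]
  exact sum_congr rfl fun ν _ => by ring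

lemma sum_quadratic_mul_bernsteinPolynomial_eval (n : ℕ) (x a b c : R) :
    ∑ ν ∈ range (n + 1), (a * ν ^ 2 + b * ν + c) * (bernsteinPolynomial R n ν).eval x
      = a * (n * (n - 1) * x ^ 2 + n * x) + b * (n * x) + c := by
  simp only [add_mul, sum_add_distrib, mul_assoc, ← mul_sum, sum_mul_bernsteinPolynomial_eval,
    sum_sq_mul_bernsteinPolynomial_eval, sum_bernsteinPolynomial_eval, mul_one]

lemma sum_mul_add_one_mul_bernsteinPolynomial_eval (n : ℕ) (x : R) :
    ∑ ν ∈ range (n + 1), (ν * (ν + 1) : R) * (bernsteinPolynomial R n ν).eval x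
      = n * (n - 1) * x ^ 2 + 2 * n * x := by
  calc _ = ∑ ν ∈ range (n + 1),
          (1 * (ν : R) ^ 2 + 1 * ν + 0) * (bernsteinPolynomial R n ν).eval x :=
        sum_congr rfl fun ν _ => by ring
    _ = _ := by rw [sum_quadratic_mul_bernsteinPolynomial_eval]; ring

lemma sum_add_two_mul_add_three_mul_bernsteinPolynomial_eval (n : ℕ) (x : R) :
    ∑ ν ∈ range (n + 1), ((ν + 2) * (ν + 3) : R) * (bernsteinPolynomial R n ν).eval x
      = n * (n - 1) * x ^ 2 + 6 * n * x + 6 := by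
  calc _ = ∑ ν ∈ range (n + 1),
          (1 * (ν : R) ^ 2 + 5 * ν + 6) * (bernsteinPolynomial R n ν).eval x :=
        sum_congr rfl fun ν _ => by ring
    _ = _ := by rw [sum_quadratic_mul_bernsteinPolynomial_eval]; ring

lemma sum_range_mul_bernsteinPolynomial_eval_of_le {n N : ℕ} (h : n ≤ N) (g : ℕ → R)
    (x : R) :
    ∑ ν ∈ range (N + 1), g ν * (bernsteinPolynomial R n ν).eval x
      = ∑ ν ∈ range (n + 1), g ν * (bernsteinPolynomial R n ν).eval x := by
  refine (sum_subset (range_subset_range.2 (by omega)) fun ν _ hν => ?_).symm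
  rw [bernsteinPolynomial.eq_zero_of_lt R (by simpa using hν), eval_zero, mul_zero]

end BernsteinMoments

lemma integral_ofReal_pow_mul_one_sub_pow (a b : ℕ) :
    ∫ t in (0:ℝ)..1, (t : ℂ) ^ a * (1 - (t : ℂ)) ^ b = a ! * b ! / (a + b + 1)! := by
  have hu : 0 < ((a : ℂ) + 1).re := by simp; positivity
  have h := Complex.betaIntegral_eval_nat_add_one_right hu b
  simp only [Complex.betaIntegral, add_sub_cancel_right, Complex.cpow_natCast] at h
  have hprod : (a ! : ℂ) * ∏ j ∈ range (b + 1), ((a : ℂ) + 1 + j) = (a + b + 1)! := by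
    rw [add_assoc, ← Nat.factorial_mul_ascFactorial, Nat.ascFactorial_eq_prod_range]
    push_cast
    rfl
  rw [h, ← hprod, mul_div_mul_left _ _ (Nat.cast_ne_zero.2 a.factorial_ne_zero)]

-- Valid for every `k`: where an exponent is truncated, the binomial coefficient vanishes.
lemma qb_add_two (α : ℝ) (m k : ℕ) (z : ℂ) :
    qb α (m + 2) k z
      = (1 - α) * ((1 - z) * (bernsteinPolynomial ℂ m k).eval z
          + if 2 ≤ k then z * (bernsteinPolynomial ℂ m (k - 2)).eval z else 0)
        + α * (bernsteinPolynomial ℂ (m + 2) k).eval z := by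
  have hfirst : (m.choose k : ℂ) * z ^ k * (1 - z) ^ (m + 2 - k - 1)
      = (1 - z) * (m.choose k * z ^ k * (1 - z) ^ (m - k)) := by
    rcases le_or_gt k m with hk | hk
    · rw [show m + 2 - k - 1 = m - k + 1 by omega, pow_succ]; ring
    · simp [Nat.choose_eq_zero_of_lt hk]
  have hshift : 2 ≤ k → (m.choose (k - 2) : ℂ) * z ^ (k - 1) * (1 - z) ^ (m + 2 - k)
      = z * (m.choose (k - 2) * z ^ (k - 2) * (1 - z) ^ (m - (k - 2))) := by
    intro hk
    obtain ⟨j, rfl⟩ := Nat.exists_eq_add_of_le' hk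
    simp only [Nat.add_sub_cancel, show j + 2 - 1 = j + 1 by omega,
      show m + 2 - (j + 2) = m - j by omega, pow_succ]
    ring
  simp only [qb, if_neg (show m + 2 ≠ 1 by omega), bernsteinPolynomial_eval, Nat.add_sub_cancel]
  split_ifs with hk
  · rw [← hshift hk, ← hfirst]; ring
  · rw [← hfirst]; ring

lemma natCast_sub_one_mul_integral_moment_two {n k : ℕ} (hk : 1 ≤ k) (hkn : k ≤ n - 1) :
    ((n : ℂ) - 1) * ∫ t in (0:ℝ)..1,
        (((n - 2).choose (k - 1) : ℂ) * (t : ℂ) ^ (k - 1) * (1 - (t : ℂ)) ^ (n - k - 1)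
          * (t : ℂ) ^ 2)
      = k * (k + 1) / (n * (n + 1)) := by
  obtain ⟨m, rfl⟩ : ∃ m, n = m + 2 := ⟨n - 2, by omega⟩
  obtain ⟨j, rfl⟩ : ∃ j, k = j + 1 := ⟨k - 1, by omega⟩
  have hj : j ≤ m := by omega
  have hintegrand : ∀ t : ℝ, (((m + 2 - 2).choose (j + 1 - 1) : ℂ) * (t : ℂ) ^ (j + 1 - 1)
        * (1 - (t : ℂ)) ^ (m + 2 - (j + 1) - 1) * (t : ℂ) ^ 2)
      = m.choose j * ((t : ℂ) ^ (j + 2) * (1 - (t : ℂ)) ^ (m - j)) := fun t => by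
    rw [show m + 2 - (j + 1) - 1 = m - j by omega]
    simp only [Nat.add_sub_cancel]
    ring
  simp only [hintegrand, intervalIntegral.integral_const_mul, integral_ofReal_pow_mul_one_sub_pow,
    show j + 2 + (m - j) + 1 = m + 3 by omega]
  have hchoose : (m.choose j * j ! * (m - j)! : ℂ) = m ! := by
    exact_mod_cast Nat.choose_mul_factorial_mul_factorial hj
  have hm : (m ! : ℂ) ≠ 0 := Nat.cast_ne_zero.2 m.factorial_ne_zero
  simp only [Nat.factorial_succ, Nat.cast_mul, Nat.cast_add, Nat.cast_one, Nat.cast_ofNat]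
  field_simp
  rw [← hchoose]
  ring

lemma sum_range_succ_eq_first_add_last_add_sum_Icc {M : Type*} [AddCommMonoid M] (g : ℕ → M)
    {n : ℕ} (hn : 1 ≤ n) :
    ∑ k ∈ range (n + 1), g k = g 0 + g n + ∑ k ∈ Icc 1 (n - 1), g k := by
  obtain ⟨m, rfl⟩ := Nat.exists_eq_add_of_le' hn
  rw [sum_range_succ, sum_range_succ', Nat.add_sub_cancel, ← Ico_add_one_right_eq_Icc,
    sum_Ico_eq_sum_range, Nat.add_sub_cancel]
  simp only [add_comm 1]
  abel

lemma Gop_sq_eq_sum (α : ℝ) {n : ℕ} (hn : 2 ≤ n) (z : ℂ) :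
    Gop α n (fun w => w ^ 2) z
      = ∑ k ∈ range (n + 1), qb α n k z * (k * (k + 1) / (n * (n + 1))) := by
  have hn0 : (n : ℂ) ≠ 0 := by exact_mod_cast (show n ≠ 0 by omega)
  have hn1 : (n : ℂ) + 1 ≠ 0 := by exact_mod_cast n.succ_ne_zero
  rw [sum_range_succ_eq_first_add_last_add_sum_Icc _ (by omega), Gop, mul_sum]
  congr 1
  · simp [hn0, hn1]
  · refine sum_congr rfl fun k hk => ?_
    obtain ⟨hk1, hkn⟩ := mem_Icc.1 hk
    rw [mul_left_comm, natCast_sub_one_mul_integral_moment_two hk1 hkn]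

lemma sum_qb_mul_moment_two (α : ℝ) (m : ℕ) (z : ℂ) :
    ∑ k ∈ range (m + 3), qb α (m + 2) k z * (k * (k + 1))
      = (1 - α) * ((m + 3) * (m * z ^ 2 + 2 * z))
        + α * ((m + 2) * ((m + 1) * z ^ 2 + 2 * z)) := by
  have hshift : ∑ k ∈ range (m + 3),
        (if 2 ≤ k then z * (bernsteinPolynomial ℂ m (k - 2)).eval z else 0) * (k * (k + 1))
      = z * ∑ j ∈ range (m + 1),
          ((j + 2) * (j + 3) : ℂ) * (bernsteinPolynomial ℂ m j).eval z := by
    rw [sum_range_succ', sum_range_succ', mul_sum]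
    simp only [if_neg (by omega : ¬2 ≤ 0 + 1), if_neg (by omega : ¬2 ≤ 0), zero_mul, add_zero]
    refine sum_congr rfl fun j _ => ?_
    rw [if_pos (by omega), show j + 1 + 1 - 2 = j by omega]
    push_cast
    ring
  calc _ = (1 - α) * ((1 - z) * ∑ k ∈ range (m + 2 + 1),
              (k * (k + 1) : ℂ) * (bernsteinPolynomial ℂ m k).eval z
            + ∑ k ∈ range (m + 3),
              (if 2 ≤ k then z * (bernsteinPolynomial ℂ m (k - 2)).eval z else 0)
                * (k * (k + 1)))
          + α * ∑ k ∈ range (m + 2 + 1),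
              (k * (k + 1) : ℂ) * (bernsteinPolynomial ℂ (m + 2) k).eval z := by
        simp only [qb_add_two, mul_sum, ← sum_add_distrib]
        exact sum_congr rfl fun k _ => by ring
    _ = _ := by
        rw [sum_range_mul_bernsteinPolynomial_eval_of_le (by omega : m ≤ m + 2), hshift,
          sum_mul_add_one_mul_bernsteinPolynomial_eval,
          sum_add_two_mul_add_three_mul_bernsteinPolynomial_eval,
          sum_mul_add_one_mul_bernsteinPolynomial_eval]
        push_cast
        ring

theorem Gop_e2_general (n : ℕ) (hn : 2 ≤ n) (α : ℝ) (z : ℂ) :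
    Gop α n (fun w => w^2) z
      = z^2 + 2 * z * (1 - z) / ((n:ℂ) + 1) * (1 + (1 - (α:ℂ)) / (n:ℂ)) := by
  obtain ⟨m, rfl⟩ := Nat.exists_eq_add_of_le' hn
  simp only [Gop_sq_eq_sum α hn, ← mul_div_assoc, ← sum_div, show m + 2 + 1 = m + 3 from rfl,
    sum_qb_mul_moment_two]
  have hm2 : (m : ℂ) + 2 ≠ 0 := by exact_mod_cast (m + 1).succ_ne_zero
  have hm3 : (m : ℂ) + 2 + 1 ≠ 0 := by exact_mod_cast (m + 2).succ_ne_zero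
  push_cast
  field_simp
  ring

theorem Gop_e2 (n : ℕ) (hn : 2 ≤ n) (α : ℝ) (hα : α ∈ Set.Icc (0:ℝ) 1) (z : ℂ) :
    Gop α n (fun w => w^2) z
      = z^2 + 2 * z * (1 - z) / ((n:ℂ) + 1) * (1 + (1 - (α:ℂ)) / (n:ℂ)) :=
  Gop_e2_general n hn α z
end

section
/- For all integers p ≥ 0, n ≥ 2, α ∈ [0,1], r ≥ 1 and all complex z with |z| ≤ r, we have |G_n^α(e_p; z)| ≤ r^p. -/
/-!
Write `x⁽ᵖ⁾` for the rising factorial and `B_M(z) = ∑ₖ C(M,k) k⁽ᵖ⁾ zᵏ (1-z)^(M-k)`. For `n = m + 2`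
the Beta integral shows that the functionals defining `Gop` send `tᵖ` to `k⁽ᵖ⁾ / (m+2)⁽ᵖ⁾`, and the
weights `qb` recombine into
`Gop α n eₚ z = (1 - α) B_{m+1}(z) / (m+1)⁽ᵖ⁾ + α B_{m+2}(z) / (m+2)⁽ᵖ⁾`.
Vandermonde's identity `k⁽ᵖ⁾ = p! ∑_{i+j=p} C(k,i) C(p-1,j)` together with
`∑ₖ C(M,k) C(k,i) zᵏ (1-z)^(M-k) = C(M,i) zⁱ` turns `B_M` into a polynomial of degree at most `p`
with nonnegative coefficients and value `M⁽ᵖ⁾` at `1`. Hence `‖B_M(z)‖ ≤ rᵖ M⁽ᵖ⁾` when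
`‖z‖ ≤ r` and `1 ≤ r`, and the convex combination above has norm at most `rᵖ`.
-/

open scoped BigOperators Nat

open Finset

noncomputable def bernsteinSum (M : ℕ) (f : ℕ → ℂ) (z : ℂ) : ℂ :=
  ∑ k ∈ range (M + 1), (M.choose k : ℂ) * f k * z ^ k * (1 - z) ^ (M - k)

lemma bernsteinSum_mul_const (M : ℕ) (f : ℕ → ℂ) (c z : ℂ) :
    bernsteinSum M (fun k => f k * c) z = bernsteinSum M f z * c := by
  simp only [bernsteinSum, sum_mul]
  exact sum_congr rfl fun _ _ => by ring

lemma bernsteinSum_choose (M i : ℕ) (z : ℂ) :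
    bernsteinSum M (fun k => (k.choose i : ℂ)) z = M.choose i * z ^ i := by
  rcases lt_or_ge M i with hMi | hiM
  · rw [Nat.choose_eq_zero_of_lt hMi, Nat.cast_zero, zero_mul]
    refine sum_eq_zero fun k hk => ?_
    simp [Nat.choose_eq_zero_of_lt (n := k) (k := i) (by simp at hk; omega)]
  · obtain ⟨j, rfl⟩ := Nat.exists_eq_add_of_le hiM
    have hsplit : i + j + 1 = i + (j + 1) := by ring
    rw [bernsteinSum, hsplit, sum_range_add, sum_eq_zero fun k hk => by
      rw [Nat.choose_eq_zero_of_lt (mem_range.1 hk)]; simp, zero_add]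
    have hterm : ∀ l ∈ range (j + 1),
        ((i + j).choose (i + l) : ℂ) * ((i + l).choose i : ℂ) * z ^ (i + l)
            * (1 - z) ^ (i + j - (i + l))
          = ((i + j).choose i : ℂ) * z ^ i * (z ^ l * (1 - z) ^ (j - l) * (j.choose l : ℂ)) := by
      intro l _
      have h := Nat.choose_mul (n := i + j) (k := i + l) (s := i) (by omega)
      rw [show i + j - i = j by omega, show i + l - i = l by omega] at h
      have hC : ((i + j).choose (i + l) : ℂ) * ((i + l).choose i : ℂ)
          = ((i + j).choose i : ℂ) * (j.choose l : ℂ) := by exact_mod_cast h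
      rw [show i + j - (i + l) = j - l by omega, pow_add]
      linear_combination (z ^ i * z ^ l * (1 - z) ^ (j - l)) * hC
    rw [sum_congr rfl hterm, ← mul_sum, ← add_pow, add_sub_cancel, one_pow, mul_one]

lemma Nat.ascFactorial_eq_factorial_mul_sum_choose (k p : ℕ) :
    k.ascFactorial p = p ! * ∑ ij ∈ antidiagonal p, k.choose ij.1 * (p - 1).choose ij.2 := by
  cases p with
  | zero => simp
  | succ q => rw [Nat.ascFactorial_eq_factorial_mul_choose', Nat.add_sub_assoc (by omega),
      Nat.add_sub_cancel, ← Nat.add_choose_eq]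

lemma bernsteinSum_ascFactorial (M p : ℕ) (z : ℂ) :
    bernsteinSum M (fun k => (k.ascFactorial p : ℂ)) z
      = ∑ ij ∈ antidiagonal p,
          ((p ! * (p - 1).choose ij.2 * M.choose ij.1 : ℝ) : ℂ) * z ^ ij.1 := by
  simp_rw [Nat.ascFactorial_eq_factorial_mul_sum_choose, bernsteinSum, Nat.cast_mul, Nat.cast_sum,
    Nat.cast_mul, mul_sum, sum_mul]
  rw [sum_comm]
  refine sum_congr rfl fun ij _ => ?_
  have h := bernsteinSum_choose M ij.1 z
  rw [bernsteinSum] at h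
  push_cast
  rw [mul_assoc, ← h, mul_sum]
  exact sum_congr rfl fun k _ => by ring

lemma norm_sum_mul_pow_le {ι : Type*} (s : Finset ι) (c : ι → ℝ) (e : ι → ℕ) {p : ℕ} {r : ℝ}
    {z : ℂ} (hc : ∀ i ∈ s, 0 ≤ c i) (he : ∀ i ∈ s, e i ≤ p) (hr : 1 ≤ r) (hz : ‖z‖ ≤ r) :
    ‖∑ i ∈ s, (c i : ℂ) * z ^ e i‖ ≤ r ^ p * ∑ i ∈ s, c i := by
  calc ‖∑ i ∈ s, (c i : ℂ) * z ^ e i‖ ≤ ∑ i ∈ s, c i * ‖z‖ ^ e i := by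
        refine (norm_sum_le _ _).trans_eq (sum_congr rfl fun i hi => ?_)
        rw [norm_mul, norm_pow, Complex.norm_real, Real.norm_of_nonneg (hc i hi)]
    _ ≤ ∑ i ∈ s, c i * r ^ p := by
        gcongr with i hi
        · exact hc i hi
        · exact (pow_le_pow_left₀ (norm_nonneg z) hz _).trans (pow_le_pow_right₀ hr (he i hi))
    _ = r ^ p * ∑ i ∈ s, c i := by rw [mul_sum]; simp_rw [mul_comm]

lemma norm_bernsteinSum_ascFactorial_le (M p : ℕ) {r : ℝ} {z : ℂ} (hr : 1 ≤ r) (hz : ‖z‖ ≤ r) :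
    ‖bernsteinSum M (fun k => (k.ascFactorial p : ℂ)) z‖ ≤ r ^ p * M.ascFactorial p := by
  rw [bernsteinSum_ascFactorial]
  refine (norm_sum_mul_pow_le _ _ _ (fun _ _ => by positivity)
    (fun _ hij => HasAntidiagonal.antidiagonal.fst_le hij) hr hz).trans_eq ?_
  rw [Nat.ascFactorial_eq_factorial_mul_sum_choose M p]
  push_cast
  rw [mul_sum, mul_sum, mul_sum]
  exact sum_congr rfl fun _ _ => by ring

lemma integral_pow_mul_one_sub_pow (a b : ℕ) :
    ∫ t in (0:ℝ)..1, (t : ℂ) ^ a * (1 - (t : ℂ)) ^ b = (a ! * b ! : ℂ) / ((a + b + 1)! : ℂ) := by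
  have hbeta : ∫ t in (0:ℝ)..1, (t : ℂ) ^ a * (1 - (t : ℂ)) ^ b
      = Complex.betaIntegral (a + 1) (b + 1) := by
    refine intervalIntegral.integral_congr fun x _ => ?_
    simp only [add_sub_cancel_right, Complex.cpow_natCast]
  have hGamma := Complex.Gamma_mul_Gamma_eq_betaIntegral (s := a + 1) (t := b + 1)
    (by simp; positivity) (by simp; positivity)
  rw [show (a : ℂ) + 1 + (b + 1) = ((a + b + 1 : ℕ) : ℂ) + 1 by push_cast; ring] at hGamma
  simp only [Complex.Gamma_nat_eq_factorial] at hGamma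
  rw [hbeta, eq_div_iff (by exact_mod_cast (a + b + 1).factorial_ne_zero), mul_comm, ← hGamma]

lemma integral_bernstein_mul_pow (m i p : ℕ) (hi : i ≤ m) :
    ((m : ℂ) + 1) * ∫ t in (0:ℝ)..1,
        (m.choose i : ℂ) * (t : ℂ) ^ i * (1 - (t : ℂ)) ^ (m - i) * (t : ℂ) ^ p
      = ((i + 1).ascFactorial p : ℂ) / ((m + 2).ascFactorial p : ℂ) := by
  have hint : ∫ t in (0:ℝ)..1,
        (m.choose i : ℂ) * (t : ℂ) ^ i * (1 - (t : ℂ)) ^ (m - i) * (t : ℂ) ^ p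
      = (m.choose i : ℂ) * ∫ t in (0:ℝ)..1, (t : ℂ) ^ (i + p) * (1 - (t : ℂ)) ^ (m - i) := by
    rw [← intervalIntegral.integral_const_mul]
    exact intervalIntegral.integral_congr fun x _ => by simp only [pow_add]; ring
  have hfact : (m + 1) * m.choose i * ((i + p)! * (m - i)!) * (m + 2).ascFactorial p
      = (i + 1).ascFactorial p * (i + p + (m - i) + 1)! := by
    rw [show i + p + (m - i) + 1 = m + 1 + p by omega, ← Nat.factorial_mul_ascFactorial (m + 1),
      ← Nat.factorial_mul_ascFactorial i, Nat.factorial_succ,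
      ← Nat.choose_mul_factorial_mul_factorial hi]
    ring
  rw [hint, integral_pow_mul_one_sub_pow,
    eq_div_iff (by exact_mod_cast (Nat.ascFactorial_pos _ _).ne'), ← mul_assoc, mul_div_assoc',
    div_mul_eq_mul_div, div_eq_iff (by exact_mod_cast Nat.factorial_ne_zero _)]
  exact_mod_cast hfact

lemma sum_qb_mul (m : ℕ) (α : ℝ) (a : ℕ → ℂ) (z : ℂ) :
    ∑ k ∈ range (m + 3), qb α (m + 2) k z * a k
      = (1 - α) * ((1 - z) * bernsteinSum m a z + z * bernsteinSum m (fun j => a (j + 2)) z)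
        + α * bernsteinSum (m + 2) a z := by
  have hlow : ∑ k ∈ range (m + 3), (m.choose k : ℂ) * z ^ k * (1 - z) ^ (m + 2 - k - 1) * a k
      = (1 - z) * bernsteinSum m a z := by
    rw [sum_range_succ, sum_range_succ, Nat.choose_succ_self, Nat.choose_eq_zero_of_lt (by omega),
      bernsteinSum, mul_sum]
    simp only [Nat.cast_zero, zero_mul, add_zero]
    refine sum_congr rfl fun k hk => ?_
    rw [show m + 2 - k - 1 = m - k + 1 by simp at hk; omega, pow_succ]
    ring
  have hhigh : ∑ k ∈ range (m + 3),
      (if 2 ≤ k then (m.choose (k - 2) : ℂ) * z ^ (k - 1) * (1 - z) ^ (m + 2 - k) else 0) * a k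
      = z * bernsteinSum m (fun j => a (j + 2)) z := by
    rw [sum_range_succ', sum_range_succ', bernsteinSum, mul_sum]
    simp only [if_neg (show ¬ 2 ≤ 0 by omega), if_neg (show ¬ 2 ≤ 0 + 1 by omega), zero_mul,
      add_zero]
    refine sum_congr rfl fun j _ => ?_
    rw [if_pos (by omega), show j + 1 + 1 - 2 = j by omega, show j + 1 + 1 - 1 = j + 1 by omega,
      show m + 2 - (j + 1 + 1) = m - j by omega, pow_succ]
    ring
  rw [← hlow, ← hhigh, ← sum_add_distrib, bernsteinSum, mul_sum, mul_sum, ← sum_add_distrib]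
  refine sum_congr rfl fun k _ => ?_
  rw [qb, if_neg (by omega), Nat.add_sub_cancel]
  split_ifs <;> ring

/-- Compare coefficients of `zⁱ (1-z)^(m+1-i)`, using `(m+1-i) C(m+1,i) = (m+1) C(m,i)` and
`i C(m+1,i) = (m+1) C(m,i-1)`. -/
lemma bernsteinSum_succ_eq (m : ℕ) (a : ℕ → ℂ) (z : ℂ) :
    bernsteinSum (m + 1) (fun i => ((m : ℂ) + 1 - i) * a i + i * a (i + 1)) z
      = (m + 1) * ((1 - z) * bernsteinSum m a z + z * bernsteinSum m (fun j => a (j + 2)) z) := by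
  have hfirst : ∑ i ∈ range (m + 2),
      ((m + 1).choose i : ℂ) * (((m : ℂ) + 1 - i) * a i) * z ^ i * (1 - z) ^ (m + 1 - i)
      = (m + 1) * ((1 - z) * bernsteinSum m a z) := by
    rw [sum_range_succ, show (m : ℂ) + 1 - (m + 1 : ℕ) = 0 by push_cast; ring, bernsteinSum,
      mul_sum, mul_sum]
    simp only [zero_mul, mul_zero, add_zero]
    refine sum_congr rfl fun i hi => ?_
    have hi : i ≤ m := by simp at hi; omega
    have h : (m.choose i : ℂ) * (m + 1) = ((m + 1).choose i : ℂ) * ((m : ℂ) + 1 - i) := by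
      rw [← Nat.cast_succ, ← Nat.cast_sub (by omega)]
      exact_mod_cast Nat.choose_mul_succ_eq m i
    rw [show m + 1 - i = m - i + 1 by omega, pow_succ]
    linear_combination (-(a i * z ^ i * (1 - z) ^ (m - i) * (1 - z))) * h
  have hsecond : ∑ i ∈ range (m + 2),
      ((m + 1).choose i : ℂ) * (i * a (i + 1)) * z ^ i * (1 - z) ^ (m + 1 - i)
      = (m + 1) * (z * bernsteinSum m (fun j => a (j + 2)) z) := by
    rw [sum_range_succ', bernsteinSum, mul_sum, mul_sum]
    simp only [Nat.cast_zero, zero_mul, mul_zero, add_zero]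
    refine sum_congr rfl fun j _ => ?_
    have h : ((m + 1).choose (j + 1) : ℂ) * (j + 1) = (m + 1) * m.choose j := by
      exact_mod_cast (Nat.add_one_mul_choose_eq m j).symm
    rw [show m + 1 - (j + 1) = m - j by omega, pow_succ]
    push_cast
    linear_combination (a (j + 1 + 1) * z ^ j * z * (1 - z) ^ (m - j)) * h
  rw [mul_add, ← hfirst, ← hsecond, bernsteinSum, ← sum_add_distrib]
  exact sum_congr rfl fun i _ => by ring

/-- The boundary values `f 0 = 0 ^ p` and `f 1 = 1` are the cases `k = 0` and `k = m + 2` of the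
value `k⁽ᵖ⁾ / (m+2)⁽ᵖ⁾` that the integral functionals take at the inner nodes. -/
lemma Gop_pow_eq_sum_qb (m p : ℕ) (α : ℝ) (z : ℂ) :
    Gop α (m + 2) (fun w => w ^ p) z
      = ∑ k ∈ range (m + 3),
          qb α (m + 2) k z * ((k.ascFactorial p : ℂ) / (m + 2).ascFactorial p) := by
  have hpos : ((m + 2).ascFactorial p : ℂ) ≠ 0 := by exact_mod_cast (Nat.ascFactorial_pos _ _).ne'
  have hzero : ((0 : ℕ).ascFactorial p : ℂ) / (m + 2).ascFactorial p = 0 ^ p := by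
    cases p with
    | zero => simp
    | succ q => simp [Nat.zero_ascFactorial]
  rw [Gop, sum_range_succ, sum_range_succ', ← Finset.Ico_add_one_right_eq_Icc, sum_Ico_eq_sum_range,
    hzero, div_self hpos, one_pow, mul_sum]
  simp only [show m + 2 - 1 = m + 1 from rfl, show m + 2 - 2 = m from rfl, Nat.add_sub_cancel]
  have hmid : ∀ j ∈ range (m + 1), ((m + 2 : ℕ) - 1 : ℂ) * (qb α (m + 2) (1 + j) z *
      ∫ t in (0:ℝ)..1, (m.choose (1 + j - 1) : ℂ) * (t : ℂ) ^ (1 + j - 1)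
        * (1 - (t : ℂ)) ^ (m + 2 - (1 + j) - 1) * (t : ℂ) ^ p)
      = qb α (m + 2) (j + 1) z * (((j + 1).ascFactorial p : ℂ) / (m + 2).ascFactorial p) := by
    intro j hj
    rw [← integral_bernstein_mul_pow m j p (by simp at hj; omega), add_comm 1 j, Nat.add_sub_cancel,
      show m + 2 - (j + 1) - 1 = m - j by omega]
    push_cast
    ring
  rw [sum_congr rfl hmid]
  ring

lemma Gop_pow_eq (m p : ℕ) (α : ℝ) (z : ℂ) :
    Gop α (m + 2) (fun w => w ^ p) z
      = (1 - α) * (bernsteinSum (m + 1) (fun k => (k.ascFactorial p : ℂ)) z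
            / (m + 1).ascFactorial p)
        + α * (bernsteinSum (m + 2) (fun k => (k.ascFactorial p : ℂ)) z
            / (m + 2).ascFactorial p) := by
  have hA₁ : ((m + 1).ascFactorial p : ℂ) ≠ 0 := by exact_mod_cast (Nat.ascFactorial_pos _ _).ne'
  have hA₂ : ((m + 2).ascFactorial p : ℂ) ≠ 0 := by exact_mod_cast (Nat.ascFactorial_pos _ _).ne'
  have hA : ((m : ℂ) + 1) * (m + 2).ascFactorial p = (m + 1 + p) * (m + 1).ascFactorial p := by
    exact_mod_cast Nat.succ_ascFactorial (m + 1) p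
  set a : ℕ → ℂ := fun k => (k.ascFactorial p : ℂ) / (m + 2).ascFactorial p
  have hb : (fun i : ℕ => ((m : ℂ) + 1 - i) * a i + i * a (i + 1))
      = fun i => (i.ascFactorial p : ℂ) * ((m + 1) / (m + 1).ascFactorial p) := by
    funext i
    have hi : (i : ℂ) * (i + 1).ascFactorial p = (i + p) * i.ascFactorial p := by
      exact_mod_cast Nat.succ_ascFactorial i p
    simp only [a]
    field_simp
    linear_combination ((m + 1).ascFactorial p : ℂ) * hi - (i.ascFactorial p : ℂ) * hA
  have hmix : (1 - z) * bernsteinSum m a z + z * bernsteinSum m (fun j => a (j + 2)) z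
      = bernsteinSum (m + 1) (fun k => (k.ascFactorial p : ℂ)) z / (m + 1).ascFactorial p := by
    have h := bernsteinSum_succ_eq m a z
    rw [hb, bernsteinSum_mul_const] at h
    have hm : (m : ℂ) + 1 ≠ 0 := by exact_mod_cast m.succ_ne_zero
    field_simp at h ⊢
    linear_combination -h
  rw [Gop_pow_eq_sum_qb, sum_qb_mul, hmix]
  simp only [div_eq_mul_inv, bernsteinSum_mul_const]

theorem Gop_monomial_bound (n p : ℕ) (hn : 2 ≤ n) (α : ℝ) (hα : α ∈ Set.Icc (0:ℝ) 1)
    (r : ℝ) (hr : 1 ≤ r) (z : ℂ) (hz : ‖z‖ ≤ r) :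
    ‖Gop α n (fun w => w^p) z‖ ≤ r^p := by
  obtain ⟨m, rfl⟩ : ∃ m, n = m + 2 := ⟨n - 2, by omega⟩
  have hbound : ∀ M, bernsteinSum M (fun k => (k.ascFactorial p : ℂ)) z / M.ascFactorial p
      ∈ Metric.closedBall 0 (r ^ p) := fun M => by
    rw [mem_closedBall_zero_iff, norm_div, Complex.norm_natCast]
    exact div_le_of_le_mul₀ (by positivity) (by positivity)
      (norm_bernsteinSum_ascFactorial_le M p hr hz)
  have hmem := convex_closedBall (0 : ℂ) (r ^ p) (hbound (m + 1)) (hbound (m + 2))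
    (sub_nonneg.2 hα.2) hα.1 (sub_add_cancel 1 α)
  rw [Gop_pow_eq, ← mem_closedBall_zero_iff]
  simpa only [Complex.real_smul, Complex.ofReal_sub, Complex.ofReal_one] using hmem
end

section
/- For all integers n ≥ 2, 2 ≤ p, α ∈ [0,1], r ≥ 1 and complex z with |z| ≤ r: |G_n^α(e_p; z) − z^p| ≤ (2p(p-1)/n) r^p. -/
open scoped BigOperators Nat

set_option linter.unusedTactic false
open Finset

lemma qb_succ (a i : ℕ) (α : ℝ) (z : ℂ) :
    qb α (a+2) (i+1) z
      = (a.choose (i+1) : ℂ) * (1-(α:ℂ)) * z^(i+1) * (1-z)^(a-i)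
        + (if 2 ≤ i+1 then (a.choose (i-1) : ℂ) * (1-(α:ℂ)) * z^i * (1-z)^(a+1-i) else 0)
        + ((a+2).choose (i+1) : ℂ) * (α:ℂ) * z^(i+1) * (1-z)^(a+1-i) := by
  rw [qb, if_neg (by omega : ¬ a+2 = 1)]
  simp only [show a+2-2 = a from by omega, show a+2-(i+1)-1 = a-i from by omega,
    show i+1-1 = i from by omega, show i+1-2 = i-1 from by omega,
    show a+2-(i+1) = a+1-i from by omega, show a+1-i-1 = a-i from by omega]

lemma bern_sum (m j : ℕ) (z : ℂ) :
    ∑ k ∈ range (m+1), (k.choose j : ℂ) * (m.choose k : ℂ) * z^k * (1-z)^(m-k)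
      = (m.choose j : ℂ) * z^j := by
  by_cases hj : j ≤ m
  · have h0 : ∑ k ∈ range (m+1), (k.choose j : ℂ) * (m.choose k : ℂ) * z^k * (1-z)^(m-k)
        = ∑ k ∈ Ico j (m+1), (k.choose j : ℂ) * (m.choose k : ℂ) * z^k * (1-z)^(m-k) := by
      refine (Finset.sum_subset ?_ ?_).symm
      · intro k hk; simp only [mem_Ico, mem_range] at *; omega
      · intro k hk hk2
        simp only [mem_Ico, mem_range] at *
        have : k < j := by omega
        simp [Nat.choose_eq_zero_of_lt this]
    rw [h0, Finset.sum_Ico_eq_sum_range]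
    have hm1 : m + 1 - j = (m - j) + 1 := by omega
    rw [hm1]
    have h1 : ∀ i ∈ range ((m-j)+1),
        ((j+i).choose j : ℂ) * (m.choose (j+i) : ℂ) * z^(j+i) * (1-z)^(m-(j+i))
        = (m.choose j : ℂ) * z^j * (z^i * (1-z)^((m-j)-i) * ((m-j).choose i : ℂ)) := by
      intro i hi
      simp only [mem_range] at hi
      have hle : j + i ≤ m := by omega
      have hc : (m.choose (j+i)) * ((j+i).choose j) = m.choose j * (m-j).choose i := by
        have := Nat.choose_mul (n := m) (Nat.le_add_right j i)
        simpa using this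
      have hcC : ((j+i).choose j : ℂ) * (m.choose (j+i) : ℂ) = (m.choose j : ℂ) * ((m-j).choose i : ℂ) := by
        rw [mul_comm]; exact_mod_cast congrArg (Nat.cast : ℕ → ℂ) hc
      have hz : z^(j+i) = z^j * z^i := pow_add z j i
      have hsub : m - (j+i) = (m-j) - i := by omega
      rw [hsub, hz, hcC]; ring
    rw [Finset.sum_congr rfl h1, ← Finset.mul_sum, ← add_pow z (1-z) (m-j)]
    have : z + (1-z) = 1 := by ring
    rw [this, one_pow, mul_one]
  · push_neg at hj
    rw [Nat.choose_eq_zero_of_lt hj]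
    have : ∀ k ∈ range (m+1), (k.choose j : ℂ) * (m.choose k : ℂ) * z^k * (1-z)^(m-k) = 0 := by
      intro k hk; simp only [mem_range] at hk
      have : k < j := by omega
      simp [Nat.choose_eq_zero_of_lt this]
    rw [Finset.sum_congr rfl this]; simp


lemma beta_int (a b : ℕ) :
    (∫ t in (0:ℝ)..1, (t:ℂ)^a * (1-(t:ℂ))^b)
      = ((a.factorial : ℂ) * (b.factorial : ℂ)) / ((a+b+1).factorial : ℂ) := by
  have hs : 0 < Complex.re ((a:ℂ)+1) := by
    simp; positivity
  have ht : 0 < Complex.re ((b:ℂ)+1) := by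
    simp; positivity
  have h := Complex.Gamma_mul_Gamma_eq_betaIntegral hs ht
  have hbeta : Complex.betaIntegral ((a:ℂ)+1) ((b:ℂ)+1)
      = ∫ t in (0:ℝ)..1, (t:ℂ)^a * (1-(t:ℂ))^b := by
    rw [Complex.betaIntegral]
    refine intervalIntegral.integral_congr (fun x hx => ?_)
    have h1 : ((a:ℂ)+1) - 1 = ((a:ℕ):ℂ) := by ring
    have h2 : ((b:ℂ)+1) - 1 = ((b:ℕ):ℂ) := by ring
    rw [h1, h2, Complex.cpow_natCast, Complex.cpow_natCast]
  have hGa : Complex.Gamma ((a:ℂ)+1) = (a.factorial : ℂ) := Complex.Gamma_nat_eq_factorial a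
  have hGb : Complex.Gamma ((b:ℂ)+1) = (b.factorial : ℂ) := Complex.Gamma_nat_eq_factorial b
  have hGab : Complex.Gamma ((a:ℂ)+1+((b:ℂ)+1)) = ((a+b+1).factorial : ℂ) := by
    have : (a:ℂ)+1+((b:ℂ)+1) = (((a+b+1 : ℕ)):ℂ) + 1 := by push_cast; ring
    rw [this]; exact Complex.Gamma_nat_eq_factorial _
  rw [hbeta, hGa, hGb, hGab] at h
  have hne : ((a+b+1).factorial : ℂ) ≠ 0 := by
    exact Nat.cast_ne_zero.mpr (Nat.factorial_ne_zero _)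
  rw [eq_div_iff hne]
  linear_combination -h

lemma vander (a b c : ℕ) :
    ∑ i ∈ range (c+1), a.choose i * b.choose (c-i) = (a+b).choose c := by
  rw [Nat.add_choose_eq, Finset.Nat.sum_antidiagonal_eq_sum_range_succ_mk]

-- extend/trim sums over range
lemma range_ext (f : ℕ → ℕ) (M N : ℕ) (hMN : N ≤ M) (h : ∀ i, N ≤ i → f i = 0) :
    ∑ i ∈ range M, f i = ∑ i ∈ range N, f i := by
  refine (Finset.sum_subset (Finset.range_subset_range.mpr hMN) ?_).symm
  intro i hi hni; simp only [mem_range] at *; exact h i (by omega)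

lemma N1 (a c : ℕ) :
    ∑ i ∈ range (c+2), (c+1).choose i * (a+2).choose (i+1) = (a+c+3).choose (c+2) := by
  have hv := vander (c+1) (a+2) (a+1)
  have h1 : ∀ i ∈ range (a+2), (c+1).choose i * (a+2).choose (a+1-i)
      = (c+1).choose i * (a+2).choose (i+1) := by
    intro i hi; simp only [mem_range] at hi
    congr 1
    have h := Nat.choose_symm (n := a+2) (k := i+1) (by omega)
    have : a+2-(i+1) = a+1-i := by omega
    rw [this] at h; exact h
  rw [Finset.sum_congr rfl h1] at hv
  have h2 : ∑ i ∈ range (a+2), (c+1).choose i * (a+2).choose (i+1)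
      = ∑ i ∈ range (c+2), (c+1).choose i * (a+2).choose (i+1) := by
    rw [range_ext _ (a+2) (min (a+2) (c+2)) (by omega), range_ext _ (c+2) (min (a+2) (c+2)) (by omega)]
    · intro i hi
      rcases Nat.lt_or_ge i (c+2) with h | h
      · have : a+2 < i+1 := by omega
        simp [Nat.choose_eq_zero_of_lt this]
      · simp [Nat.choose_eq_zero_of_lt (show c+1 < i by omega)]
    · intro i hi
      rcases Nat.lt_or_ge i (c+2) with h | h
      · have : a+2 < i+1 := by omega
        simp [Nat.choose_eq_zero_of_lt this]
      · simp [Nat.choose_eq_zero_of_lt (show c+1 < i by omega)]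
  rw [h2] at hv
  rw [hv]
  have h := Nat.choose_symm (n := a+c+3) (k := c+2) (by omega)
  have e : a+c+3-(c+2) = a+1 := by omega
  rw [e] at h
  have e2 : c+1+(a+2) = a+c+3 := by omega
  rw [e2]
  exact h

lemma N2 (a c : ℕ) :
    ∑ i ∈ range (c+2), (c+1).choose i * (a+1).choose i = (a+c+2).choose (c+1) := by
  have hv := vander (c+1) (a+1) (a+1)
  have h1 : ∀ i ∈ range (a+2), (c+1).choose i * (a+1).choose (a+1-i)
      = (c+1).choose i * (a+1).choose i := by
    intro i hi; simp only [mem_range] at hi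
    congr 1
    exact Nat.choose_symm (n := a+1) (k := i) (by omega)
  rw [Finset.sum_congr rfl h1] at hv
  have h2 : ∑ i ∈ range (a+2), (c+1).choose i * (a+1).choose i
      = ∑ i ∈ range (c+2), (c+1).choose i * (a+1).choose i := by
    rw [range_ext _ (a+2) (min (a+2) (c+2)) (by omega), range_ext _ (c+2) (min (a+2) (c+2)) (by omega)]
    · intro i hi
      rcases Nat.lt_or_ge i (c+2) with h | h
      · simp [Nat.choose_eq_zero_of_lt (show a+1 < i by omega)]
      · simp [Nat.choose_eq_zero_of_lt (show c+1 < i by omega)]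
    · intro i hi
      rcases Nat.lt_or_ge i (c+2) with h | h
      · simp [Nat.choose_eq_zero_of_lt (show a+1 < i by omega)]
      · simp [Nat.choose_eq_zero_of_lt (show c+1 < i by omega)]
  rw [h2] at hv
  rw [hv]
  have h := Nat.choose_symm (n := a+c+2) (k := c+1) (by omega)
  have e : a+c+2-(c+1) = a+1 := by omega
  rw [e] at h
  have e2 : c+1+(a+1) = a+c+2 := by omega
  rw [e2]
  exact h

lemma N3 (a c : ℕ) :
    ∑ i ∈ range (c+1), (c+1).choose (i+1) * a.choose i = (a+c+1).choose c := by
  have hv := vander (c+1) a (a+1)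
  rw [Finset.sum_range_succ'] at hv
  have hz : (c+1).choose 0 * a.choose (a+1-0) = 0 := by
    simp [Nat.choose_eq_zero_of_lt (show a < a+1 by omega)]
  rw [hz, add_zero] at hv
  have h1 : ∀ i ∈ range (a+1), (c+1).choose (i+1) * a.choose (a+1-(i+1))
      = (c+1).choose (i+1) * a.choose i := by
    intro i hi; simp only [mem_range] at hi
    congr 1
    have hs := Nat.choose_symm (n := a) (k := i) (by omega)
    have : a - i = a+1-(i+1) := by omega
    rw [this] at hs; exact hs
  rw [Finset.sum_congr rfl h1] at hv
  have h2 : ∑ i ∈ range (a+1), (c+1).choose (i+1) * a.choose i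
      = ∑ i ∈ range (c+1), (c+1).choose (i+1) * a.choose i := by
    rw [range_ext _ (a+1) (min (a+1) (c+1)) (by omega), range_ext _ (c+1) (min (a+1) (c+1)) (by omega)]
    · intro i hi
      rcases Nat.lt_or_ge i (c+1) with h | h
      · simp [Nat.choose_eq_zero_of_lt (show a < i by omega)]
      · simp [Nat.choose_eq_zero_of_lt (show c+1 < i+1 by omega)]
    · intro i hi
      rcases Nat.lt_or_ge i (c+1) with h | h
      · simp [Nat.choose_eq_zero_of_lt (show a < i by omega)]
      · simp [Nat.choose_eq_zero_of_lt (show c+1 < i+1 by omega)]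
  rw [h2] at hv
  rw [hv]
  have h := Nat.choose_symm (n := a+c+1) (k := c) (by omega)
  have e : a+c+1-c = a+1 := by omega
  rw [e] at h
  have e2 : c+1+a = a+c+1 := by omega
  rw [e2]
  exact h

noncomputable def Kc (a c : ℕ) : ℝ :=
  ((a+1).factorial * (c+2).factorial : ℝ) / ((a+c+3).factorial : ℝ)

noncomputable def lam (a c : ℕ) (j : ℕ) : ℝ :=
  if j = 0 then 0 else Kc a c * ((c+1).choose (j-1))

lemma Kc_pos (a c : ℕ) : 0 < Kc a c := by
  unfold Kc; positivity

lemma lam_nonneg (a c j : ℕ) : 0 ≤ lam a c j := by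
  unfold lam; split
  · exact le_refl 0
  · have := Kc_pos a c
    positivity

lemma fact_ne (m : ℕ) : ((m.factorial : ℝ)) ≠ 0 :=
  Nat.cast_ne_zero.mpr (Nat.factorial_ne_zero m)

lemma SL1 (a c : ℕ) :
    ∑ j ∈ range (c+3), lam a c j * ((a+2).choose j : ℝ) = 1 := by
  rw [Finset.sum_range_succ']
  have h0 : lam a c 0 * ((a+2).choose 0 : ℝ) = 0 := by simp [lam]
  rw [h0, add_zero]
  have h1 : ∀ i ∈ range (c+2), lam a c (i+1) * ((a+2).choose (i+1) : ℝ)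
      = Kc a c * (((c+1).choose i * (a+2).choose (i+1) : ℕ) : ℝ) := by
    intro i hi; simp [lam, Kc]; push_cast; ring
  rw [Finset.sum_congr rfl h1, ← Finset.mul_sum, ← Nat.cast_sum, N1]
  have hle : c+2 ≤ a+c+3 := by omega
  rw [Nat.cast_choose ℝ hle]
  have e : a+c+3-(c+2) = a+1 := by omega
  rw [e, Kc]
  field_simp

lemma SL2 (a c : ℕ) :
    ∑ j ∈ range (c+3), lam a c j * (j : ℝ) * ((a+2).choose j : ℝ)
      = (a+2)*(c+2)/(a+c+3) := by
  rw [Finset.sum_range_succ']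
  have h0 : lam a c 0 * ((0:ℕ) : ℝ) * ((a+2).choose 0 : ℝ) = 0 := by simp [lam]
  rw [h0, add_zero]
  have h1 : ∀ i ∈ range (c+2), lam a c (i+1) * ((i+1 : ℕ) : ℝ) * ((a+2).choose (i+1) : ℝ)
      = Kc a c * (a+2) * (((c+1).choose i * (a+1).choose i : ℕ) : ℝ) := by
    intro i hi
    have hn := Nat.add_one_mul_choose_eq (a+1) i
    have hnC : ((a:ℝ)+2) * ((a+1).choose i : ℝ) = ((a+2).choose (i+1) : ℝ) * ((i:ℝ)+1) := by
      exact_mod_cast congrArg (Nat.cast : ℕ → ℝ) hn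
    simp only [lam, if_neg (Nat.succ_ne_zero i), Nat.add_sub_cancel]
    push_cast
    linear_combination (-(Kc a c * (((c+1).choose i : ℕ) : ℝ))) * hnC
  rw [Finset.sum_congr rfl h1, ← Finset.mul_sum, ← Nat.cast_sum, N2]
  have hle : c+1 ≤ a+c+2 := by omega
  rw [Nat.cast_choose ℝ hle]
  have e : a+c+2-(c+1) = a+1 := by omega
  rw [e, Kc]
  have h3 : ((a+c+3).factorial : ℝ) = (a+c+3) * ((a+c+2).factorial : ℝ) := by
    have : (a+c+3).factorial = (a+c+3) * (a+c+2).factorial := rfl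
    exact_mod_cast congrArg (Nat.cast : ℕ → ℝ) this
  have h4 : ((c+2).factorial : ℝ) = (c+2) * ((c+1).factorial : ℝ) := by
    have : (c+2).factorial = (c+2) * (c+1).factorial := rfl
    exact_mod_cast congrArg (Nat.cast : ℕ → ℝ) this
  rw [h3, h4]
  have := fact_ne (a+1); have := fact_ne (c+1); have := fact_ne (a+c+2)
  field_simp

lemma SL3 (a c : ℕ) :
    ∑ j ∈ range (c+3), lam a c j * (if 2 ≤ j then ((a.choose (j-2)) : ℝ) else 0)
      = (c+2)*(c+1)/((a+c+3)*(a+c+2)) := by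
  rw [Finset.sum_range_succ']
  have h0 : lam a c 0 * (if 2 ≤ 0 then ((a.choose (0-2)) : ℝ) else 0) = 0 := by simp [lam]
  rw [h0, add_zero, Finset.sum_range_succ']
  have h0' : lam a c (0+1) * (if 2 ≤ 0+1 then ((a.choose (0+1-2)) : ℝ) else 0) = 0 := by norm_num
  rw [h0', add_zero]
  have h1 : ∀ i ∈ range (c+1), lam a c (i+1+1) * (if 2 ≤ i+1+1 then ((a.choose (i+1+1-2)) : ℝ) else 0)
      = Kc a c * (((c+1).choose (i+1) * a.choose i : ℕ) : ℝ) := by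
    intro i hi
    have : 2 ≤ i+1+1 := by omega
    rw [if_pos this]
    simp only [lam, if_neg (Nat.succ_ne_zero (i+1)), Nat.add_sub_cancel]
    push_cast
    ring
  rw [Finset.sum_congr rfl h1, ← Finset.mul_sum, ← Nat.cast_sum, N3]
  have hle : c ≤ a+c+1 := by omega
  rw [Nat.cast_choose ℝ hle]
  have e : a+c+1-c = a+1 := by omega
  rw [e, Kc]
  have h3 : ((a+c+3).factorial : ℝ) = (a+c+3) * ((a+c+2) * ((a+c+1).factorial : ℝ)) := by
    have : (a+c+3).factorial = (a+c+3) * ((a+c+2) * (a+c+1).factorial) := rfl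
    exact_mod_cast congrArg (Nat.cast : ℕ → ℝ) this
  have h4 : ((c+2).factorial : ℝ) = (c+2) * ((c+1) * ((c).factorial : ℝ)) := by
    have : (c+2).factorial = (c+2) * ((c+1) * (c).factorial) := rfl
    exact_mod_cast congrArg (Nat.cast : ℕ → ℝ) this
  rw [h3, h4]
  have := fact_ne a; have := fact_ne c; have := fact_ne (a+1); have := fact_ne (a+c+1)
  field_simp

noncomputable def W (a : ℕ) (α : ℝ) (z : ℂ) (j : ℕ) : ℂ :=
  (1-(α:ℂ)) * ((1-z) * (a.choose j : ℂ) * z^j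
    + z * ∑ s ∈ range (j+1), ((Nat.choose 2 s * a.choose (j-s) : ℕ) : ℂ) * z^(j-s))
  + (α:ℂ) * ((a+2).choose j : ℂ) * z^j

lemma QS_eval (a j : ℕ) (hj : 1 ≤ j) (α : ℝ) (z : ℂ) :
    ∑ i ∈ range (a+2), ((i+1).choose j : ℂ) *
      ((a.choose (i+1) : ℂ) * (1-(α:ℂ)) * z^(i+1) * (1-z)^(a-i)
        + (if 2 ≤ i+1 then (a.choose (i-1) : ℂ) * (1-(α:ℂ)) * z^i * (1-z)^(a+1-i) else 0)
        + ((a+2).choose (i+1) : ℂ) * (α:ℂ) * z^(i+1) * (1-z)^(a+1-i))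
      = W a α z j := by
  have hsplit : ∀ i ∈ range (a+2), ((i+1).choose j : ℂ) *
      ((a.choose (i+1) : ℂ) * (1-(α:ℂ)) * z^(i+1) * (1-z)^(a-i)
        + (if 2 ≤ i+1 then (a.choose (i-1) : ℂ) * (1-(α:ℂ)) * z^i * (1-z)^(a+1-i) else 0)
        + ((a+2).choose (i+1) : ℂ) * (α:ℂ) * z^(i+1) * (1-z)^(a+1-i))
      = (1-(α:ℂ)) * (((i+1).choose j : ℂ) * (a.choose (i+1) : ℂ) * z^(i+1) * (1-z)^(a-i))
        + (1-(α:ℂ)) * (if 1 ≤ i then ((i+1).choose j : ℂ) * (a.choose (i-1) : ℂ) * z^i * (1-z)^(a+1-i) else 0)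
        + (α:ℂ) * (((i+1).choose j : ℂ) * ((a+2).choose (i+1) : ℂ) * z^(i+1) * (1-z)^(a+1-i)) := by
    intro i _
    rcases Nat.eq_zero_or_pos i with rfl | hi
    · norm_num; ring
    · have hi' : 1 ≤ i := hi
      rw [if_pos (by omega : 2 ≤ i+1), if_pos hi']; ring
  rw [Finset.sum_congr rfl hsplit]
  rw [Finset.sum_add_distrib, Finset.sum_add_distrib, ← Finset.mul_sum, ← Finset.mul_sum, ← Finset.mul_sum]
  -- A-sum
  have hA : ∑ i ∈ range (a+2), ((i+1).choose j : ℂ) * (a.choose (i+1) : ℂ) * z^(i+1) * (1-z)^(a-i)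
      = (1-z) * ((a.choose j : ℂ) * z^j) := by
    have hb := bern_sum a j z
    have h1 : ∑ i ∈ range (a+2), ((i+1).choose j : ℂ) * (a.choose (i+1) : ℂ) * z^(i+1) * (1-z)^(a-i)
        = ∑ i ∈ range a, ((i+1).choose j : ℂ) * (a.choose (i+1) : ℂ) * z^(i+1) * (1-z)^(a-i) := by
      rw [Finset.sum_range_succ, Finset.sum_range_succ]
      simp [Nat.choose_eq_zero_of_lt (show a < a+1 by omega),
        Nat.choose_eq_zero_of_lt (show a < a+2 by omega)]
    have h2 : (1-z) * ∑ k ∈ range (a+1), (k.choose j : ℂ) * (a.choose k : ℂ) * z^k * (1-z)^(a-k)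
        = ∑ i ∈ range a, ((i+1).choose j : ℂ) * (a.choose (i+1) : ℂ) * z^(i+1) * (1-z)^(a-i) := by
      rw [Finset.mul_sum, Finset.sum_range_succ']
      have hz0 : (1-z) * ((Nat.choose 0 j : ℂ) * (a.choose 0 : ℂ) * z^0 * (1-z)^(a-0)) = 0 := by
        rw [Nat.choose_eq_zero_of_lt (show 0 < j by omega)]
        simp
      rw [hz0, add_zero]
      refine Finset.sum_congr rfl (fun i hi => ?_)
      simp only [mem_range] at hi
      have he : a - i = (a - (i+1)) + 1 := by omega
      rw [he, pow_succ]
      ring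
    rw [h1, ← h2, hb]
  -- C-sum
  have hC : ∑ i ∈ range (a+2), ((i+1).choose j : ℂ) * ((a+2).choose (i+1) : ℂ) * z^(i+1) * (1-z)^(a+1-i)
      = ((a+2).choose j : ℂ) * z^j := by
    have hb := bern_sum (a+2) j z
    rw [Finset.sum_range_succ'] at hb
    have hz0 : (Nat.choose 0 j : ℂ) * ((a+2).choose 0 : ℂ) * z^0 * (1-z)^(a+2-0) = 0 := by
      rw [Nat.choose_eq_zero_of_lt (show 0 < j by omega)]
      simp
    rw [hz0, add_zero] at hb
    rw [← hb]
    refine Finset.sum_congr rfl (fun i hi => ?_)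
    simp only [mem_range] at hi
    have he : a+2-(i+1) = a+1-i := by omega
    rw [he]
  -- B-sum
  have hB : ∑ i ∈ range (a+2), (if 1 ≤ i then ((i+1).choose j : ℂ) * (a.choose (i-1) : ℂ) * z^i * (1-z)^(a+1-i) else 0)
      = z * ∑ s ∈ range (j+1), ((Nat.choose 2 s * a.choose (j-s) : ℕ) : ℂ) * z^(j-s) := by
    rw [Finset.sum_range_succ']
    rw [if_neg (by omega : ¬ 1 ≤ 0), add_zero]
    have h1 : ∀ i ∈ range (a+1), (if 1 ≤ i+1 then ((i+2).choose j : ℂ) * (a.choose (i+1-1) : ℂ) * z^(i+1) * (1-z)^(a+1-(i+1)) else 0)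
        = z * (∑ s ∈ range (j+1), ((Nat.choose 2 s : ℕ) : ℂ) * ((i.choose (j-s) : ℂ) * (a.choose i : ℂ) * z^i * (1-z)^(a-i))) := by
      intro i hi
      rw [if_pos (by omega : 1 ≤ i+1)]
      have he1 : i+1-1 = i := by omega
      have he2 : a+1-(i+1) = a-i := by omega
      rw [he1, he2]
      have hch : ((i+2).choose j : ℂ) = ∑ s ∈ range (j+1), ((Nat.choose 2 s : ℕ) : ℂ) * ((i.choose (j-s) : ℕ) : ℂ) := by
        have hn := Nat.add_choose_eq 2 i j
        rw [Finset.Nat.sum_antidiagonal_eq_sum_range_succ_mk] at hn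
        have : i+2 = 2+i := by omega
        rw [this, hn]
        push_cast
        rfl
      have he3 : i + 1 + 1 = i + 2 := by omega
      rw [he3]
      calc ((i+2).choose j : ℂ) * (a.choose i : ℂ) * z^(i+1) * (1-z)^(a-i)
          = ((i+2).choose j : ℂ) * ((a.choose i : ℂ) * z^(i+1) * (1-z)^(a-i)) := by ring
        _ = (∑ s ∈ range (j+1), ((Nat.choose 2 s : ℕ) : ℂ) * ((i.choose (j-s) : ℕ) : ℂ)) * ((a.choose i : ℂ) * z^(i+1) * (1-z)^(a-i)) := by rw [hch]
        _ = z * ∑ s ∈ range (j+1), ((Nat.choose 2 s : ℕ) : ℂ) * ((i.choose (j-s) : ℂ) * (a.choose i : ℂ) * z^i * (1-z)^(a-i)) := by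
            rw [Finset.sum_mul, Finset.mul_sum]
            refine Finset.sum_congr rfl (fun s hs => ?_)
            rw [pow_succ]
            ring
    rw [Finset.sum_congr rfl h1, ← Finset.mul_sum]
    congr 1
    rw [Finset.sum_comm]
    refine Finset.sum_congr rfl (fun s hs => ?_)
    have hbs := bern_sum a (j-s) z
    calc ∑ i ∈ range (a+1), ((Nat.choose 2 s : ℕ) : ℂ) * ((i.choose (j-s) : ℂ) * (a.choose i : ℂ) * z^i * (1-z)^(a-i))
        = ((Nat.choose 2 s : ℕ) : ℂ) * ∑ i ∈ range (a+1), (i.choose (j-s) : ℂ) * (a.choose i : ℂ) * z^i * (1-z)^(a-i) := by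
          rw [Finset.mul_sum]
      _ = ((Nat.choose 2 s : ℕ) : ℂ) * ((a.choose (j-s) : ℂ) * z^(j-s)) := by rw [hbs]
      _ = ((Nat.choose 2 s * a.choose (j-s) : ℕ) : ℂ) * z^(j-s) := by push_cast; ring
  rw [hA, hB, hC, W]
  ring

lemma cc_real (a c i : ℕ) (hi : i ≤ a) :
    Kc a c * ((i+c+2).choose (c+2) : ℝ)
      = ((a:ℝ)+1) * (a.choose i : ℝ) * (((i+c+2).factorial * (a-i).factorial : ℕ) : ℝ)
          / ((a+c+3).factorial : ℝ) := by
  have h1 := Nat.choose_mul_factorial_mul_factorial hi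
  have h2 := Nat.choose_mul_factorial_mul_factorial (show c+2 ≤ i+c+2 by omega)
  rw [show i+c+2-(c+2) = i by omega] at h2
  have h1R : (a.choose i : ℝ) * (i.factorial : ℝ) * ((a-i).factorial : ℝ) = (a.factorial : ℝ) := by
    exact_mod_cast congrArg (Nat.cast : ℕ → ℝ) h1
  have h2R : ((i+c+2).choose (c+2) : ℝ) * ((c+2).factorial : ℝ) * (i.factorial : ℝ)
      = ((i+c+2).factorial : ℝ) := by
    exact_mod_cast congrArg (Nat.cast : ℕ → ℝ) h2
  have hfaR : ((a+1).factorial : ℝ) = ((a:ℝ)+1) * (a.factorial : ℝ) := by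
    have : (a+1).factorial = (a+1) * a.factorial := rfl
    exact_mod_cast congrArg (Nat.cast : ℕ → ℝ) this
  have key : ((a+1).factorial : ℝ) * ((c+2).factorial : ℝ) * ((i+c+2).choose (c+2) : ℝ) * (i.factorial : ℝ)
      = ((a:ℝ)+1) * (a.choose i : ℝ) * ((i+c+2).factorial : ℝ) * ((a-i).factorial : ℝ) * (i.factorial : ℝ) := by
    linear_combination ((a+1).factorial:ℝ)*h2R - (((a:ℝ)+1)*((i+c+2).factorial:ℝ))*h1R
      + ((i+c+2).factorial:ℝ)*hfaR
  have key2 : ((a+1).factorial : ℝ) * ((c+2).factorial : ℝ) * ((i+c+2).choose (c+2) : ℝ)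
      = ((a:ℝ)+1) * (a.choose i : ℝ) * ((i+c+2).factorial : ℝ) * ((a-i).factorial : ℝ) :=
    mul_right_cancel₀ (fact_ne i) key
  rw [Kc]
  push_cast
  rw [div_mul_eq_mul_div, div_eq_div_iff (fact_ne _) (fact_ne _)]
  linear_combination ((a+c+3).factorial:ℝ) * key2

lemma Kc_top (a c : ℕ) : Kc a c * ((a+c+3).choose (c+2) : ℝ) = 1 := by
  have hle : c+2 ≤ a+c+3 := by omega
  rw [Nat.cast_choose ℝ hle, show a+c+3-(c+2) = a+1 by omega, Kc]
  field_simp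

lemma cc_expand (a c i : ℕ) :
    ((Kc a c * ((i+c+2).choose (c+2) : ℝ)) : ℝ)
      = ∑ j ∈ range (c+3), lam a c j * ((i+1).choose j : ℝ) := by
  have hv := vander (c+1) (i+1) (c+2)
  rw [show c+1+(i+1) = i+c+2 by omega] at hv
  have hr := Finset.sum_range_reflect (fun s => (c+1).choose s * (i+1).choose (c+2-s)) (c+3)
  simp only [show c+3-1 = c+2 from rfl] at hr
  have hterm : ∀ j ∈ range (c+3), lam a c j * ((i+1).choose j : ℝ)
      = Kc a c * (((c+1).choose (c+2-j) * (i+1).choose (c+2-(c+2-j)) : ℕ) : ℝ) := by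
    intro j hj
    simp only [mem_range] at hj
    rcases Nat.eq_zero_or_pos j with rfl | hjp
    · simp [lam, Nat.choose_eq_zero_of_lt (show c+1 < c+2-0 by omega)]
    · obtain ⟨m, rfl⟩ : ∃ m, j = m+1 := ⟨j-1, by omega⟩
      have hs : (c+1).choose (c+2-(m+1)) = (c+1).choose m := by
        rw [show c+2-(m+1) = c+1-m by omega]
        exact Nat.choose_symm (by omega)
      rw [show c+2-(c+2-(m+1)) = m+1 by omega, hs]
      simp only [lam, if_neg (Nat.succ_ne_zero m), Nat.add_sub_cancel]
      push_cast
      ring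
  rw [Finset.sum_congr rfl hterm, ← Finset.mul_sum, ← Nat.cast_sum]
  congr 2
  exact (hr.trans hv).symm
lemma Gop_repr (a c : ℕ) (α : ℝ) (z : ℂ) :
    Gop α (a+2) (fun w => w^(c+2)) z
      = ∑ j ∈ range (c+3), ((lam a c j : ℝ) : ℂ) * W a α z j := by
  rw [Gop]
  simp only [zero_pow (show c+2 ≠ 0 by omega), one_pow, mul_zero, mul_one, zero_add]
  rw [← Finset.Ico_add_one_right_eq_Icc, Finset.sum_Ico_eq_sum_range]
  simp only [Nat.succ_sub_one, Nat.add_sub_cancel]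
  have hterm : ∀ i ∈ range (a+1),
      qb α (a+2) (1+i) z * (∫ t in (0:ℝ)..1,
        ((a.choose (1+i-1) : ℂ) * (t:ℂ)^(1+i-1) * (1-(t:ℂ))^(a+2-(1+i)-1) * ((t:ℂ))^(c+2)))
      = qb α (a+2) (i+1) z *
          ((a.choose i : ℂ) * ((((i+c+2).factorial * (a-i).factorial : ℕ)) : ℂ)
            / (((a+c+3).factorial : ℕ) : ℂ)) := by
    intro i hi
    simp only [mem_range] at hi
    rw [show 1+i-1 = i by omega, show a+2-(1+i)-1 = a-i by omega, show 1+i = i+1 by omega]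
    congr 1
    have hci : (∫ t in (0:ℝ)..1, ((a.choose i : ℂ) * (t:ℂ)^i * (1-(t:ℂ))^(a-i) * ((t:ℂ))^(c+2)))
        = (a.choose i : ℂ) * ∫ t in (0:ℝ)..1, ((t:ℂ)^(i+(c+2)) * (1-(t:ℂ))^(a-i)) := by
      rw [← intervalIntegral.integral_const_mul]
      refine intervalIntegral.integral_congr (fun t ht => ?_)
      rw [pow_add]
      ring
    rw [hci, beta_int (i+(c+2)) (a-i)]
    rw [show i+(c+2)+(a-i)+1 = a+c+3 by omega, show i+(c+2) = i+c+2 by omega]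
    push_cast
    ring
  rw [Finset.sum_congr rfl hterm]
  have hcast : ((a+2 : ℕ) : ℂ) - 1 = ((a:ℂ)+1) := by push_cast; ring
  rw [hcast, Finset.mul_sum]
  have hterm2 : ∀ i ∈ range (a+1),
      ((a:ℂ)+1) * (qb α (a+2) (i+1) z *
        ((a.choose i : ℂ) * ((((i+c+2).factorial * (a-i).factorial : ℕ)) : ℂ)
          / (((a+c+3).factorial : ℕ) : ℂ)))
      = ((Kc a c * ((i+c+2).choose (c+2) : ℝ) : ℝ) : ℂ) * qb α (a+2) (i+1) z := by
    intro i hi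
    simp only [mem_range] at hi
    have hr := cc_real a c i (by omega)
    have hrC : ((Kc a c * ((i+c+2).choose (c+2) : ℝ) : ℝ) : ℂ)
        = ((a:ℂ)+1) * (a.choose i : ℂ) * (((i+c+2).factorial * (a-i).factorial : ℕ) : ℂ)
            / (((a+c+3).factorial : ℕ) : ℂ) := by
      rw [hr]
      push_cast
      ring
    rw [hrC]
    ring
  rw [Finset.sum_congr rfl hterm2]
  have htop : qb α (a+2) (a+2) z
      = ((Kc a c * (((a+1)+c+2).choose (c+2) : ℝ) : ℝ) : ℂ) * qb α (a+2) ((a+1)+1) z := by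
    rw [show (a+1)+c+2 = a+c+3 by omega, Kc_top]
    norm_num
  rw [htop, add_comm, ← Finset.sum_range_succ
    (fun i => ((Kc a c * ((i+c+2).choose (c+2) : ℝ) : ℝ) : ℂ) * qb α (a+2) (i+1) z) (a+1)]
  have hexp : ∀ i ∈ range (a+2),
      ((Kc a c * ((i+c+2).choose (c+2) : ℝ) : ℝ) : ℂ) * qb α (a+2) (i+1) z
      = ∑ j ∈ range (c+3), ((lam a c j : ℝ) : ℂ) * (((i+1).choose j : ℂ) * qb α (a+2) (i+1) z) := by
    intro i hi
    rw [cc_expand a c i]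
    push_cast
    rw [Finset.sum_mul]
    refine Finset.sum_congr rfl (fun j hj => ?_)
    ring
  rw [Finset.sum_congr rfl hexp, Finset.sum_comm]
  refine Finset.sum_congr rfl (fun j hj => ?_)
  simp only [mem_range] at hj
  rcases Nat.eq_zero_or_pos j with rfl | hjp
  · simp [lam]
  · rw [← Finset.mul_sum]
    congr 1
    have hq : ∀ i ∈ range (a+2), ((i+1).choose j : ℂ) * qb α (a+2) (i+1) z
        = ((i+1).choose j : ℂ) *
          ((a.choose (i+1) : ℂ) * (1-(α:ℂ)) * z^(i+1) * (1-z)^(a-i)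
            + (if 2 ≤ i+1 then (a.choose (i-1) : ℂ) * (1-(α:ℂ)) * z^i * (1-z)^(a+1-i) else 0)
            + ((a+2).choose (i+1) : ℂ) * (α:ℂ) * z^(i+1) * (1-z)^(a+1-i)) := by
      intro i hi
      rw [qb_succ]
    rw [Finset.sum_congr rfl hq]
    exact QS_eval a j hjp α z
lemma W_sub (a j q : ℕ) (α : ℝ) (z : ℂ) :
    W a α z j - ((a+2).choose j : ℂ) * z^q
      = (1-(α:ℂ)) * ((a.choose j : ℂ) * (z^j - z^q)
          + ∑ s ∈ range j, ((Nat.choose 2 (s+1) * a.choose (j-(s+1)) : ℕ) : ℂ) * (z^(j-s) - z^q))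
        + (α:ℂ) * ((a+2).choose j : ℂ) * (z^j - z^q) := by
  have hC : ((a+2).choose j : ℕ) = ∑ s ∈ range (j+1), Nat.choose 2 s * a.choose (j-s) := by
    have hn := Nat.add_choose_eq 2 a j
    rw [Finset.Nat.sum_antidiagonal_eq_sum_range_succ_mk] at hn
    rw [show a+2 = 2+a by omega, hn]
  have hCp : ((a+2).choose j : ℕ)
      = (∑ s ∈ range j, Nat.choose 2 (s+1) * a.choose (j-(s+1))) + a.choose j := by
    rw [hC, Finset.sum_range_succ']
    norm_num
  have hCC : ((a+2).choose j : ℂ)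
      = (((∑ s ∈ range j, Nat.choose 2 (s+1) * a.choose (j-(s+1))) : ℕ) : ℂ) + (a.choose j : ℂ) := by
    exact_mod_cast congrArg (Nat.cast : ℕ → ℂ) hCp
  have hWsum : ∑ s ∈ range (j+1), ((Nat.choose 2 s * a.choose (j-s) : ℕ) : ℂ) * z^(j-s)
      = ∑ s ∈ range j, ((Nat.choose 2 (s+1) * a.choose (j-(s+1)) : ℕ) : ℂ) * z^(j-(s+1))
        + (a.choose j : ℂ) * z^j := by
    rw [Finset.sum_range_succ']
    norm_num
  rw [W, hWsum]
  have hzmul : z * (∑ s ∈ range j, ((Nat.choose 2 (s+1) * a.choose (j-(s+1)) : ℕ) : ℂ) * z^(j-(s+1))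
        + (a.choose j : ℂ) * z^j)
      = ∑ s ∈ range j, ((Nat.choose 2 (s+1) * a.choose (j-(s+1)) : ℕ) : ℂ) * z^(j-s)
        + (a.choose j : ℂ) * (z^j * z) := by
    rw [mul_add, Finset.mul_sum]
    congr 1
    · refine Finset.sum_congr rfl (fun s hs => ?_)
      simp only [mem_range] at hs
      rw [show j-s = (j-(s+1))+1 by omega, pow_succ]
      ring
    · ring
  rw [hzmul]
  have hRS : ∑ s ∈ range j, ((Nat.choose 2 (s+1) * a.choose (j-(s+1)) : ℕ) : ℂ) * (z^(j-s) - z^q)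
      = (∑ s ∈ range j, ((Nat.choose 2 (s+1) * a.choose (j-(s+1)) : ℕ) : ℂ) * z^(j-s))
        - (((∑ s ∈ range j, Nat.choose 2 (s+1) * a.choose (j-(s+1))) : ℕ) : ℂ) * z^q := by
    rw [Nat.cast_sum, Finset.sum_mul, ← Finset.sum_sub_distrib]
    refine Finset.sum_congr rfl (fun s hs => ?_)
    push_cast
    ring
  rw [hRS, hCC]
  ring

lemma norm_zq (c q : ℕ) (hqp : q ≤ c+2) {z : ℂ} {r : ℝ} (hr : 1 ≤ r) (hz : ‖z‖ ≤ r) :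
    ‖z^q - z^(c+2)‖ ≤ 2*(((c+2):ℝ)-q)*r^(c+2) := by
  rcases eq_or_lt_of_le hqp with rfl | h
  · norm_num
  · have hq : ‖z^q‖ ≤ r^q := by
      rw [norm_pow]
      exact pow_le_pow_left₀ (norm_nonneg z) hz q
    have hp : ‖z^(c+2)‖ ≤ r^(c+2) := by
      rw [norm_pow]
      exact pow_le_pow_left₀ (norm_nonneg z) hz (c+2)
    have h2 : r^q ≤ r^(c+2) := pow_le_pow_right₀ hr (by omega)
    have h3 : (1:ℝ) ≤ ((c+2):ℝ)-q := by
      have : (q:ℝ)+1 ≤ ((c+2):ℝ) := by exact_mod_cast h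
      linarith
    have hrp : (0:ℝ) ≤ r^(c+2) := by positivity
    have := norm_sub_le (z^q) (z^(c+2))
    nlinarith

lemma Xeq (a c j : ℕ) :
    (a.choose j : ℝ) * (((c+2):ℝ) - j)
      + ∑ s ∈ range j, ((Nat.choose 2 (s+1) * a.choose (j-(s+1)) : ℕ) : ℝ) * (((c+2):ℝ) - ((j-s : ℕ):ℝ))
    = ((a+2).choose j : ℝ) * (((c+2):ℝ) - j) + (if 2 ≤ j then (a.choose (j-2) : ℝ) else 0) := by
  match j with
  | 0 => norm_num
  | 1 =>
    rw [if_neg (by omega : ¬ 2 ≤ 1)]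
    rw [Finset.sum_range_one]
    norm_num [Nat.choose_one_right]
    ring
  | (m+2) =>
    rw [if_pos (by omega : 2 ≤ m+2)]
    rw [Finset.sum_range_succ', Finset.sum_range_succ']
    have hzero : ∀ s ∈ range m, ((Nat.choose 2 (s+1+1+1) * a.choose (m+2-(s+1+1+1)) : ℕ) : ℝ)
        * (((c+2):ℝ) - ((m+2-(s+1+1) : ℕ):ℝ)) = 0 := by
      intro s hs
      rw [Nat.choose_eq_zero_of_lt (show 2 < s+1+1+1 by omega)]
      norm_num
    rw [Finset.sum_congr rfl hzero, Finset.sum_const_zero, zero_add]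
    have c21 : Nat.choose 2 (0+1) = 2 := rfl
    have c22 : Nat.choose 2 (0+1+1) = 1 := rfl
    rw [c21, c22]
    have hpas : ((a+2).choose (m+2) : ℝ)
        = (a.choose (m+2) : ℝ) + 2*(a.choose (m+1) : ℝ) + (a.choose m : ℝ) := by
      have h1 : (a+2).choose (m+2) = (a+1).choose (m+1) + (a+1).choose (m+2) :=
        Nat.choose_succ_succ (a+1) (m+1)
      have h2 : (a+1).choose (m+1) = a.choose m + a.choose (m+1) := Nat.choose_succ_succ a m
      have h3 : (a+1).choose (m+2) = a.choose (m+1) + a.choose (m+2) := Nat.choose_succ_succ a (m+1)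
      have : (a+2).choose (m+2) = a.choose m + a.choose (m+1) + (a.choose (m+1) + a.choose (m+2)) := by
        rw [h1, h2, h3]
      rw [this]
      push_cast
      ring
    rw [hpas]
    push_cast
    ring
lemma normW (a c j : ℕ) (hj : j ≤ c+2) (α : ℝ) (hα0 : 0 ≤ α) (hα1 : α ≤ 1)
    {z : ℂ} {r : ℝ} (hr : 1 ≤ r) (hz : ‖z‖ ≤ r) :
    ‖W a α z j - ((a+2).choose j : ℂ) * z^(c+2)‖
      ≤ 2*r^(c+2) * ((1-α) * ((a.choose j : ℝ) * (((c+2):ℝ) - j)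
          + ∑ s ∈ range j, ((Nat.choose 2 (s+1) * a.choose (j-(s+1)) : ℕ) : ℝ)
              * (((c+2):ℝ) - ((j-s : ℕ):ℝ)))
        + α * (((a+2).choose j : ℝ) * (((c+2):ℝ) - j))) := by
  rw [W_sub]
  have hV : ‖(a.choose j : ℂ) * (z^j - z^(c+2))
      + ∑ s ∈ range j, ((Nat.choose 2 (s+1) * a.choose (j-(s+1)) : ℕ) : ℂ) * (z^(j-s) - z^(c+2))‖
      ≤ 2*r^(c+2) * ((a.choose j : ℝ) * (((c+2):ℝ) - j)
          + ∑ s ∈ range j, ((Nat.choose 2 (s+1) * a.choose (j-(s+1)) : ℕ) : ℝ)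
              * (((c+2):ℝ) - ((j-s : ℕ):ℝ))) := by
    have hA : ‖(a.choose j : ℂ) * (z^j - z^(c+2))‖
        ≤ (a.choose j : ℝ) * (2*(((c+2):ℝ)-j)*r^(c+2)) := by
      rw [norm_mul, Complex.norm_natCast]
      exact mul_le_mul_of_nonneg_left (norm_zq c j hj hr hz) (Nat.cast_nonneg _)
    have hS : ‖∑ s ∈ range j, ((Nat.choose 2 (s+1) * a.choose (j-(s+1)) : ℕ) : ℂ) * (z^(j-s) - z^(c+2))‖
        ≤ ∑ s ∈ range j, ((Nat.choose 2 (s+1) * a.choose (j-(s+1)) : ℕ) : ℝ)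
            * (2*(((c+2):ℝ) - ((j-s : ℕ):ℝ))*r^(c+2)) := by
      refine (norm_sum_le _ _).trans (Finset.sum_le_sum (fun s hs => ?_))
      rw [norm_mul, Complex.norm_natCast]
      exact mul_le_mul_of_nonneg_left (norm_zq c (j-s) (by omega) hr hz) (Nat.cast_nonneg _)
    have hsum : ∑ s ∈ range j, ((Nat.choose 2 (s+1) * a.choose (j-(s+1)) : ℕ) : ℝ)
            * (2*(((c+2):ℝ) - ((j-s : ℕ):ℝ))*r^(c+2))
        = 2*r^(c+2) * ∑ s ∈ range j, ((Nat.choose 2 (s+1) * a.choose (j-(s+1)) : ℕ) : ℝ)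
            * (((c+2):ℝ) - ((j-s : ℕ):ℝ)) := by
      rw [Finset.mul_sum]
      exact Finset.sum_congr rfl (fun s hs => by ring)
    calc ‖_ + _‖ ≤ _ := norm_add_le _ _
      _ ≤ (a.choose j : ℝ) * (2*(((c+2):ℝ)-j)*r^(c+2))
          + ∑ s ∈ range j, ((Nat.choose 2 (s+1) * a.choose (j-(s+1)) : ℕ) : ℝ)
              * (2*(((c+2):ℝ) - ((j-s : ℕ):ℝ))*r^(c+2)) := add_le_add hA hS
      _ = 2*r^(c+2) * ((a.choose j : ℝ) * (((c+2):ℝ) - j)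
          + ∑ s ∈ range j, ((Nat.choose 2 (s+1) * a.choose (j-(s+1)) : ℕ) : ℝ)
              * (((c+2):ℝ) - ((j-s : ℕ):ℝ))) := by rw [hsum]; ring
  have hY : ‖(α:ℂ) * ((a+2).choose j : ℂ) * (z^j - z^(c+2))‖
      ≤ α * (((a+2).choose j : ℝ) * (2*(((c+2):ℝ)-j)*r^(c+2))) := by
    rw [norm_mul, norm_mul, Complex.norm_natCast, Complex.norm_real, Real.norm_eq_abs,
      abs_of_nonneg hα0, mul_assoc]
    refine mul_le_mul_of_nonneg_left ?_ hα0
    exact mul_le_mul_of_nonneg_left (norm_zq c j hj hr hz) (Nat.cast_nonneg _)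
  have h1α : ‖(1-(α:ℂ))‖ = 1-α := by
    rw [show (1-(α:ℂ)) = (((1-α : ℝ)):ℂ) by push_cast; ring, Complex.norm_real,
      Real.norm_eq_abs, abs_of_nonneg (by linarith)]
  calc ‖_ + _‖ ≤ ‖(1-(α:ℂ)) * _‖ + ‖(α:ℂ) * ((a+2).choose j : ℂ) * (z^j - z^(c+2))‖ :=
        norm_add_le _ _
    _ ≤ (1-α) * (2*r^(c+2) * ((a.choose j : ℝ) * (((c+2):ℝ) - j)
          + ∑ s ∈ range j, ((Nat.choose 2 (s+1) * a.choose (j-(s+1)) : ℕ) : ℝ)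
              * (((c+2):ℝ) - ((j-s : ℕ):ℝ))))
        + α * (((a+2).choose j : ℝ) * (2*(((c+2):ℝ)-j)*r^(c+2))) := by
      refine add_le_add ?_ hY
      rw [norm_mul, h1α]
      exact mul_le_mul_of_nonneg_left hV (by linarith)
    _ = 2*r^(c+2) * ((1-α) * ((a.choose j : ℝ) * (((c+2):ℝ) - j)
          + ∑ s ∈ range j, ((Nat.choose 2 (s+1) * a.choose (j-(s+1)) : ℕ) : ℝ)
              * (((c+2):ℝ) - ((j-s : ℕ):ℝ)))
        + α * (((a+2).choose j : ℝ) * (((c+2):ℝ) - j))) := by ring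
theorem Gop_monomial_error (n p : ℕ) (hn : 2 ≤ n) (hp : 2 ≤ p)
    (α : ℝ) (hα : α ∈ Set.Icc (0:ℝ) 1)
    (r : ℝ) (hr : 1 ≤ r) (z : ℂ) (hz : ‖z‖ ≤ r) :
    ‖Gop α n (fun w => w^p) z - z^p‖ ≤ 2 * p * ((p:ℝ) - 1) / n * r^p := by
  obtain ⟨a, rfl⟩ : ∃ a, n = a+2 := ⟨n-2, by omega⟩
  obtain ⟨c, rfl⟩ : ∃ c, p = c+2 := ⟨p-2, by omega⟩
  obtain ⟨hα0, hα1⟩ := hα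
  rw [Gop_repr]
  have hone : (∑ j ∈ range (c+3), ((lam a c j : ℝ):ℂ) * ((a+2).choose j : ℂ)) = 1 := by
    have h := SL1 a c
    have h2 : ((∑ j ∈ range (c+3), lam a c j * ((a+2).choose j : ℝ) : ℝ) : ℂ) = ((1:ℝ):ℂ) := by
      rw [h]
    push_cast at h2
    rw [← h2]
  have hdiff : (∑ j ∈ range (c+3), ((lam a c j : ℝ):ℂ) * W a α z j) - z^(c+2)
      = ∑ j ∈ range (c+3), ((lam a c j : ℝ):ℂ)
          * (W a α z j - ((a+2).choose j : ℂ) * z^(c+2)) := by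
    have hzp : z^(c+2) = ∑ j ∈ range (c+3), ((lam a c j : ℝ):ℂ)
        * (((a+2).choose j : ℂ) * z^(c+2)) := by
      calc z^(c+2) = (1:ℂ) * z^(c+2) := (one_mul _).symm
        _ = (∑ j ∈ range (c+3), ((lam a c j : ℝ):ℂ) * ((a+2).choose j : ℂ)) * z^(c+2) := by
            rw [hone]
        _ = ∑ j ∈ range (c+3), ((lam a c j : ℝ):ℂ) * (((a+2).choose j : ℂ) * z^(c+2)) := by
            rw [Finset.sum_mul]
            exact Finset.sum_congr rfl (fun j hj => by ring)
    have h1 : ∀ j ∈ range (c+3), ((lam a c j : ℝ):ℂ)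
        * (W a α z j - ((a+2).choose j : ℂ) * z^(c+2))
        = ((lam a c j : ℝ):ℂ) * W a α z j
          - ((lam a c j : ℝ):ℂ) * (((a+2).choose j : ℂ) * z^(c+2)) :=
      fun j _ => mul_sub _ _ _
    rw [Finset.sum_congr rfl h1, Finset.sum_sub_distrib, ← hzp]
  rw [hdiff]
  -- notation for the X and Y quantities
  set X : ℕ → ℝ := fun j => (a.choose j : ℝ) * (((c+2):ℝ) - j)
      + ∑ s ∈ range j, ((Nat.choose 2 (s+1) * a.choose (j-(s+1)) : ℕ) : ℝ)
          * (((c+2):ℝ) - ((j-s : ℕ):ℝ)) with hX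
  set Y : ℕ → ℝ := fun j => ((a+2).choose j : ℝ) * (((c+2):ℝ) - j) with hYdef
  have step1 : ‖∑ j ∈ range (c+3), ((lam a c j : ℝ):ℂ)
      * (W a α z j - ((a+2).choose j : ℂ) * z^(c+2))‖
      ≤ ∑ j ∈ range (c+3), lam a c j * (2*r^(c+2) * ((1-α) * X j + α * Y j)) := by
    refine (norm_sum_le _ _).trans (Finset.sum_le_sum (fun j hj => ?_))
    simp only [mem_range] at hj
    rw [norm_mul, Complex.norm_real, Real.norm_eq_abs, abs_of_nonneg (lam_nonneg a c j)]
    exact mul_le_mul_of_nonneg_left (normW a c j (by omega) α hα0 hα1 hr hz) (lam_nonneg a c j)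
  refine step1.trans ?_
  -- evaluate sums
  have hSy : ∑ j ∈ range (c+3), lam a c j * Y j
      = ((c:ℝ)+2)*((c:ℝ)+1)/((a:ℝ)+(c:ℝ)+3) := by
    have h1 := SL1 a c
    have h2 := SL2 a c
    have hsplit : ∑ j ∈ range (c+3), lam a c j * Y j
        = ((c:ℝ)+2) * (∑ j ∈ range (c+3), lam a c j * ((a+2).choose j : ℝ))
          - ∑ j ∈ range (c+3), lam a c j * (j:ℝ) * ((a+2).choose j : ℝ) := by
      rw [Finset.mul_sum, ← Finset.sum_sub_distrib]
      refine Finset.sum_congr rfl (fun j hj => ?_)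
      simp only [hYdef]
      push_cast
      ring
    rw [hsplit, h1, h2]
    have hpos : ((a:ℝ)+(c:ℝ)+3) ≠ 0 := by positivity
    field_simp
    ring
  have hSx : ∑ j ∈ range (c+3), lam a c j * X j
      = ((c:ℝ)+2)*((c:ℝ)+1)/((a:ℝ)+(c:ℝ)+3)
        + ((c:ℝ)+2)*((c:ℝ)+1)/(((a:ℝ)+(c:ℝ)+3)*((a:ℝ)+(c:ℝ)+2)) := by
    have hsplit : ∑ j ∈ range (c+3), lam a c j * X j
        = (∑ j ∈ range (c+3), lam a c j * Y j)
          + ∑ j ∈ range (c+3), lam a c j * (if 2 ≤ j then (a.choose (j-2) : ℝ) else 0) := by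
      rw [← Finset.sum_add_distrib]
      refine Finset.sum_congr rfl (fun j hj => ?_)
      rw [hX, hYdef]
      simp only
      rw [Xeq a c j]
      ring
    rw [hsplit, hSy, SL3]
  have hfin : ∑ j ∈ range (c+3), lam a c j * (2*r^(c+2) * ((1-α) * X j + α * Y j))
      = 2*r^(c+2) * ((1-α) * (∑ j ∈ range (c+3), lam a c j * X j)
          + α * (∑ j ∈ range (c+3), lam a c j * Y j)) := by
    have hr1 : (1-α) * (∑ j ∈ range (c+3), lam a c j * X j)
        = ∑ j ∈ range (c+3), (1-α)*(lam a c j * X j) := Finset.mul_sum _ _ _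
    have hr2 : α * (∑ j ∈ range (c+3), lam a c j * Y j)
        = ∑ j ∈ range (c+3), α*(lam a c j * Y j) := Finset.mul_sum _ _ _
    rw [hr1, hr2, ← Finset.sum_add_distrib, Finset.mul_sum]
    exact Finset.sum_congr rfl (fun j _ => by ring)
  rw [hfin, hSx, hSy]
  have hrp : (0:ℝ) ≤ r^(c+2) := by positivity
  have hgoal : 2 * ((c+2:ℕ):ℝ) * (((c+2:ℕ):ℝ) - 1) / ((a+2:ℕ):ℝ) * r^(c+2)
      = 2*r^(c+2) * (((c:ℝ)+2)*((c:ℝ)+1)/((a:ℝ)+2)) := by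
    push_cast
    ring
  rw [hgoal]
  have hkey : (1-α) * (((c:ℝ)+2)*((c:ℝ)+1)/((a:ℝ)+(c:ℝ)+3)
        + ((c:ℝ)+2)*((c:ℝ)+1)/(((a:ℝ)+(c:ℝ)+3)*((a:ℝ)+(c:ℝ)+2)))
      + α * (((c:ℝ)+2)*((c:ℝ)+1)/((a:ℝ)+(c:ℝ)+3))
      ≤ ((c:ℝ)+2)*((c:ℝ)+1)/((a:ℝ)+2) := by
    have ha3 : (0:ℝ) < (a:ℝ)+(c:ℝ)+3 := by positivity
    have ha2' : (0:ℝ) < (a:ℝ)+(c:ℝ)+2 := by positivity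
    have ha2 : (0:ℝ) < (a:ℝ)+2 := by positivity
    have hc1 : (0:ℝ) ≤ ((c:ℝ)+2)*((c:ℝ)+1) := by positivity
    have hse : (0:ℝ) ≤ ((c:ℝ)+2)*((c:ℝ)+1)/(((a:ℝ)+(c:ℝ)+3)*((a:ℝ)+(c:ℝ)+2)) := by positivity
    have hmono : (1-α) * (((c:ℝ)+2)*((c:ℝ)+1)/((a:ℝ)+(c:ℝ)+3)
          + ((c:ℝ)+2)*((c:ℝ)+1)/(((a:ℝ)+(c:ℝ)+3)*((a:ℝ)+(c:ℝ)+2)))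
        + α * (((c:ℝ)+2)*((c:ℝ)+1)/((a:ℝ)+(c:ℝ)+3))
        ≤ ((c:ℝ)+2)*((c:ℝ)+1)/((a:ℝ)+(c:ℝ)+3)
          + ((c:ℝ)+2)*((c:ℝ)+1)/(((a:ℝ)+(c:ℝ)+3)*((a:ℝ)+(c:ℝ)+2)) := by
      nlinarith [hse, hα0, hα1]
    refine hmono.trans ?_
    have e : ((c:ℝ)+2)*((c:ℝ)+1)/((a:ℝ)+(c:ℝ)+3)
        + ((c:ℝ)+2)*((c:ℝ)+1)/(((a:ℝ)+(c:ℝ)+3)*((a:ℝ)+(c:ℝ)+2))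
        = ((c:ℝ)+2)*((c:ℝ)+1)/((a:ℝ)+(c:ℝ)+2) := by
      field_simp
      ring
    rw [e]
    gcongr
    · linarith
  calc 2*r^(c+2) * ((1-α) * (((c:ℝ)+2)*((c:ℝ)+1)/((a:ℝ)+(c:ℝ)+3)
        + ((c:ℝ)+2)*((c:ℝ)+1)/(((a:ℝ)+(c:ℝ)+3)*((a:ℝ)+(c:ℝ)+2)))
      + α * (((c:ℝ)+2)*((c:ℝ)+1)/((a:ℝ)+(c:ℝ)+3)))
      ≤ 2*r^(c+2) * (((c:ℝ)+2)*((c:ℝ)+1)/((a:ℝ)+2)) := by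
        refine mul_le_mul_of_nonneg_left hkey (by positivity)
end
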